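/- arXiv:2206.02226 — 11 statements merged into one kernel-verified Lean document; each statement's English description precedes it below -/
import Mathlib

section
/- Let L > 0, J ≥ N ≥ 2 be real numbers, γ ∈ (0,1], and define a_n = N/(γ(n+J)) for all n ∈ ℕ. Suppose (c_n) is a sequence with c_n ≤ L for all n, and (s_n) is a sequence of nonnegative reals with s_0 ≤ L and s_{n+1} ≤ (1 - γ a_{n+1}) s_n + (a_n - a_{n+1}) c_n for all n. Then s_n ≤ J·L/(γ(n+J)) for all n ∈ ℕ. -/
theorem sabach_shtern_lemma (L J N γ : ℝ) (hL : 0 < L) (hN : 2 ≤ N) (hJN : N ≤ J)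
    (hγ : γ ∈ Set.Ioc (0:ℝ) 1) (a c s : ℕ → ℝ)
    (ha : ∀ n : ℕ, a n = N / (γ * (n + J)))
    (hc : ∀ n : ℕ, c n ≤ L)
    (hs_nonneg : ∀ n : ℕ, 0 ≤ s n) (hs0 : s 0 ≤ L)
    (hrec : ∀ n : ℕ, s (n + 1) ≤ (1 - γ * a (n + 1)) * s n + (a n - a (n + 1)) * c n) :
    ∀ n : ℕ, s n ≤ J * L / (γ * (n + J)) := by
  obtain ⟨hγ0, hγ1⟩ := hγ
  have hJ : (0:ℝ) < J := by linarith
  intro n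
  induction n with
  | zero =>
      have hd : 0 < γ * ((0:ℕ) + J) := by
        push_cast; nlinarith
      rw [le_div_iff₀ hd]
      push_cast
      nlinarith [hs_nonneg 0, mul_pos hγ0 hJ, mul_le_mul_of_nonneg_right hs0 (mul_pos hγ0 hJ).le, mul_le_mul_of_nonneg_left hγ1 (mul_nonneg hL.le hJ.le)]
  | succ n ih =>
      have hd1 : 0 < γ * ((n:ℝ) + J) := by positivity
      have hd2 : 0 < γ * (((n:ℝ) + 1) + J) := by positivity
      have ha1 : a n = N / (γ * ((n:ℝ) + J)) := ha n
      have ha2 : a (n + 1) = N / (γ * (((n:ℝ) + 1) + J)) := by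
        rw [ha (n + 1)]; push_cast; ring_nf
      have hcoef : 0 ≤ 1 - γ * a (n + 1) := by
        rw [ha2]
        rw [sub_nonneg, mul_div_assoc']
        rw [div_le_one hd2]
        nlinarith
      have hdiff : 0 ≤ a n - a (n + 1) := by
        rw [ha1, ha2, sub_nonneg]
        apply div_le_div_of_nonneg_left (by linarith) hd1
        nlinarith
      have h1 : s (n + 1) ≤ (1 - γ * a (n + 1)) * (J * L / (γ * ((n:ℝ) + J)))
          + (a n - a (n + 1)) * L := by
        calc s (n + 1) ≤ (1 - γ * a (n + 1)) * s n + (a n - a (n + 1)) * c n := hrec n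
          _ ≤ _ := by
            gcongr
            exact hc n
      have h2 : (1 - γ * a (n + 1)) * (J * L / (γ * ((n:ℝ) + J)))
          + (a n - a (n + 1)) * L ≤ J * L / (γ * (((n:ℝ) + 1) + J)) := by
        rw [ha1, ha2]
        rw [div_sub_div _ _ hd1.ne' hd2.ne']
        rw [ ← sub_nonneg]
        have key : (0:ℝ) ≤ γ * L * (J * N - J - N) := by
          have h1' : (N-1)*N ≤ (N-1)*J := mul_le_mul_of_nonneg_left hJN (by linarith)
          have h2' : (0:ℝ) ≤ J * N - J - N := by nlinarith
          exact mul_nonneg (mul_nonneg hγ0.le hL.le) h2'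
        have expand : J * L / (γ * (↑n + 1 + J)) -
            ((1 - γ * (N / (γ * (↑n + 1 + J)))) * (J * L / (γ * (↑n + J))) +
              (N * (γ * (↑n + 1 + J)) - γ * (↑n + J) * N) / (γ * (↑n + J) * (γ * (↑n + 1 + J))) * L)
            = γ * L * (J * N - J - N) / (γ * (↑n + J) * (γ * (↑n + 1 + J))) := by
          field_simp
          ring
        rw [expand]
        positivity
      calc s (n + 1) ≤ _ := h1
        _ ≤ _ := h2.trans_eq (by push_cast; ring_nf)
end

section
/- Let (s_n), (c_n) be sequences of nonnegative reals and (a_n) a sequence in [0,1] with s_{n+1} ≤ (1 - a_n) s_n + c_n for all n. Assume L ∈ ℕ, L ≥ 1 is an upper bound on (s_n), that θ : ℕ → ℕ is a rate of divergence for the series Σ a_n (i.e., Σ_{i=0}^{θ(n)} a_i ≥ n for all n), and χ : ℕ → ℕ is a Cauchy modulus for the series Σ c_n (i.e., for all k and all n ≥ χ(k) and all p, Σ_{i=n+1}^{n+p} c_i ≤ 1/(k+1)). Then for all k ∈ ℕ and all n ≥ θ(χ(2k+1) + 1 + ⌈ln(2L(k+1))⌉) + 1, we have s_n ≤ 1/(k+1).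 -/
/-!
Unrolling the recursion from `N = χ(2k+1) + 1` to `n` gives
`s n ≤ (∏_{N ≤ i < n} (1 - a i)) s N + ∑_{N ≤ i < n} c i`. Since `1 - x ≤ exp (-x)`, the product
is at most `exp (-∑_{N ≤ i < n} a i)`, and the rate of divergence makes that sum at least
`M = ⌈ln (2L(k+1))⌉`, so the first term is at most `L e^{-M} ≤ 1/(2(k+1))`. The Cauchy modulus
bounds the second term by `1/(2k+2)` as well.
-/

open Finset Real

theorem Finset.prod_one_sub_le_exp_neg_sum {ι : Type*} (t : Finset ι) {a : ι → ℝ}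
    (ha : ∀ i ∈ t, a i ≤ 1) : ∏ i ∈ t, (1 - a i) ≤ exp (-∑ i ∈ t, a i) := by
  rw [← sum_neg_distrib, exp_sum]
  exact prod_le_prod (fun i hi => sub_nonneg.2 (ha i hi)) fun i _ => one_sub_le_exp_neg _

theorem sum_range_le_of_le_one {a : ℕ → ℝ} (ha : ∀ i, a i ≤ 1) (n : ℕ) :
    ∑ i ∈ range n, a i ≤ n := by
  simpa using sum_le_card_nsmul (range n) a 1 fun i _ => ha i

theorem sum_range_le_add_sum_Ico {a : ℕ → ℝ} (ha : ∀ i, a i ≤ 1) (N n : ℕ) :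
    ∑ i ∈ range n, a i ≤ N + ∑ i ∈ Ico N n, a i := by
  have hle := sum_range_le_of_le_one ha
  rcases le_total N n with hNn | hnN
  · rw [range_eq_Ico, ← sum_Ico_consecutive _ (Nat.zero_le N) hNn, ← range_eq_Ico]
    linarith [hle N]
  · rw [Ico_eq_empty_of_le hnN, sum_empty, add_zero]
    exact (hle n).trans (Nat.cast_le.2 hnN)

theorem mul_exp_neg_ceil_log_le (K x : ℝ) (hK : 0 < K) (hx : 0 ≤ x) :
    x * exp (-⌈log (K * x)⌉₊) ≤ 1 / K := by
  rcases hx.eq_or_lt with rfl | hx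
  · simp [hK.le]
  have hKx : 0 < K * x := mul_pos hK hx
  calc x * exp (-⌈log (K * x)⌉₊) ≤ x * exp (-log (K * x)) := by
        gcongr
        exact Nat.le_ceil _
    _ = 1 / K := by
        rw [exp_neg, exp_log hKx]
        field_simp

section XuRecursion

variable {s a c : ℕ → ℝ} (ha : ∀ n, a n ∈ Set.Icc (0 : ℝ) 1) (hc : ∀ n, 0 ≤ c n)
  (hrec : ∀ n, s (n + 1) ≤ (1 - a n) * s n + c n)
include ha hc hrec

theorem le_prod_one_sub_mul_add_sum_Ico {N m : ℕ} (hNm : N ≤ m) :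
    s m ≤ (∏ i ∈ Ico N m, (1 - a i)) * s N + ∑ i ∈ Ico N m, c i := by
  induction m, hNm using Nat.le_induction with
  | base => simp
  | succ m hNm ih =>
    rw [prod_Ico_succ_top hNm, sum_Ico_succ_top hNm]
    have hsum : 0 ≤ ∑ i ∈ Ico N m, c i := sum_nonneg fun i _ => hc i
    have ham : 0 ≤ 1 - a m := sub_nonneg.2 (ha m).2
    nlinarith [hrec m, mul_le_mul_of_nonneg_left ih ham, mul_nonneg (ha m).1 hsum]

theorem le_mul_exp_neg_add_sum_Ico {L M : ℝ} (hL : 0 ≤ L) (hLs : ∀ n, s n ≤ L) {N n : ℕ}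
    (hNn : N ≤ n) (hM : M ≤ ∑ i ∈ Ico N n, a i) : s n ≤ L * exp (-M) + ∑ i ∈ Ico N n, c i := by
  have hprod : 0 ≤ ∏ i ∈ Ico N n, (1 - a i) := prod_nonneg fun i _ => sub_nonneg.2 (ha i).2
  calc s n ≤ (∏ i ∈ Ico N n, (1 - a i)) * s N + ∑ i ∈ Ico N n, c i :=
        le_prod_one_sub_mul_add_sum_Ico ha hc hrec hNn
    _ ≤ (∏ i ∈ Ico N n, (1 - a i)) * L + ∑ i ∈ Ico N n, c i := by gcongr; exact hLs N
    _ ≤ exp (-M) * L + ∑ i ∈ Ico N n, c i := by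
        gcongr
        exact ((Ico N n).prod_one_sub_le_exp_neg_sum fun i _ => (ha i).2).trans
            (exp_le_exp.2 (neg_le_neg hM))
    _ = L * exp (-M) + ∑ i ∈ Ico N n, c i := by ring

end XuRecursion

theorem quantitative_xu_general (s c : ℕ → ℝ) (a : ℕ → ℝ)
    (hc : ∀ n, 0 ≤ c n) (ha : ∀ n, a n ∈ Set.Icc (0:ℝ) 1)
    (hrec : ∀ n, s (n + 1) ≤ (1 - a n) * s n + c n)
    (L : ℕ) (hLs : ∀ n, s n ≤ L)
    (θ : ℕ → ℕ) (hθ : ∀ n : ℕ, (n : ℝ) ≤ ∑ i ∈ Finset.range (θ n + 1), a i)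
    (χ : ℕ → ℕ)
    (hχ : ∀ k n : ℕ, χ k ≤ n → ∀ p : ℕ,
      ∑ i ∈ Finset.Ico (n + 1) (n + 1 + p), c i ≤ 1 / (k + 1)) :
    ∀ k n : ℕ,
      θ (χ (2 * k + 1) + 1 + ⌈Real.log (2 * L * (k + 1))⌉₊) + 1 ≤ n →
      s n ≤ 1 / (k + 1) := by
  intro k n hn
  set N := χ (2 * k + 1) + 1
  set M := ⌈Real.log (2 * L * (k + 1))⌉₊
  have hdiv : ((N + M : ℕ) : ℝ) ≤ ∑ i ∈ range n, a i :=
    (hθ (N + M)).trans (sum_le_sum_of_subset_of_nonneg (range_subset_range.2 hn)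
      fun i _ _ => (ha i).1)
  have hsplit := sum_range_le_add_sum_Ico (fun i => (ha i).2) N n
  have hNn : N ≤ n := by
    have h := hdiv.trans (sum_range_le_of_le_one (fun i => (ha i).2) n)
    exact (Nat.le_add_right N M).trans (by exact_mod_cast h)
  have hM : (M : ℝ) ≤ ∑ i ∈ Ico N n, a i := by push_cast at hdiv; linarith
  have hcauchy : ∑ i ∈ Ico N n, c i ≤ 1 / (2 * (k + 1)) := by
    have h := hχ (2 * k + 1) _ le_rfl (n - N)
    rw [show χ (2 * k + 1) + 1 + (n - N) = n by omega] at h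
    convert h using 2
    push_cast; ring
  have hdecay : (L : ℝ) * exp (-M) ≤ 1 / (2 * (k + 1)) := by
    have h := mul_exp_neg_ceil_log_le (2 * (k + 1)) L (by positivity) L.cast_nonneg
    rwa [show (2 : ℝ) * (k + 1) * L = 2 * L * (k + 1) by ring] at h
  calc s n ≤ L * exp (-M) + ∑ i ∈ Ico N n, c i :=
        le_mul_exp_neg_add_sum_Ico ha hc hrec L.cast_nonneg hLs hNn hM
    _ ≤ 1 / (2 * (k + 1)) + 1 / (2 * (k + 1)) := add_le_add hdecay hcauchy
    _ = 1 / (k + 1) := by field_simp; ring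

theorem quantitative_xu (s c : ℕ → ℝ) (a : ℕ → ℝ)
    (hs : ∀ n, 0 ≤ s n) (hc : ∀ n, 0 ≤ c n) (ha : ∀ n, a n ∈ Set.Icc (0:ℝ) 1)
    (hrec : ∀ n, s (n + 1) ≤ (1 - a n) * s n + c n)
    (L : ℕ) (hL : 1 ≤ L) (hLs : ∀ n, s n ≤ L)
    (θ : ℕ → ℕ) (hθ : ∀ n : ℕ, (n : ℝ) ≤ ∑ i ∈ Finset.range (θ n + 1), a i)
    (χ : ℕ → ℕ)
    (hχ : ∀ k n : ℕ, χ k ≤ n → ∀ p : ℕ,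
      ∑ i ∈ Finset.Ico (n + 1) (n + 1 + p), c i ≤ 1 / (k + 1)) :
    ∀ k n : ℕ,
      θ (χ (2 * k + 1) + 1 + ⌈Real.log (2 * L * (k + 1))⌉₊) + 1 ≤ n →
      s n ≤ 1 / (k + 1) :=
  quantitative_xu_general s c a hc ha hrec L hLs θ hθ χ hχ
end

section
/- Let (s_n), (c_n) be sequences of nonnegative reals and (a_n) a sequence in [0,1] satisfying s_{n+1} ≤ (1 - a_n) s_n + c_n for all n. If Σ a_n diverges and Σ c_n converges, then lim s_n = 0. -/
theorem xu_lemma_special_case (s c : ℕ → ℝ) (a : ℕ → ℝ)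
    (hs : ∀ n, 0 ≤ s n) (hc : ∀ n, 0 ≤ c n) (ha : ∀ n, a n ∈ Set.Icc (0:ℝ) 1)
    (hrec : ∀ n, s (n + 1) ≤ (1 - a n) * s n + c n)
    (hdiv : Filter.Tendsto (fun n => ∑ i ∈ Finset.range n, a i) Filter.atTop Filter.atTop)
    (hconv : Summable c) :
    Filter.Tendsto s Filter.atTop (nhds 0) := by
  have key : ∀ n m, n ≤ m → s m ≤ (∏ i ∈ Finset.Ico n m, (1 - a i)) * s n
      + ∑ i ∈ Finset.Ico n m, c i := by
    intro n m hnm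
    induction m, hnm using Nat.le_induction with
    | base => simp
    | succ m hm ih =>
      have h1 := hrec m
      have ha' := ha m
      rw [Finset.prod_Ico_succ_top hm, Finset.sum_Ico_succ_top hm]
      have hprodnn : 0 ≤ ∏ i ∈ Finset.Ico n m, (1 - a i) :=
        Finset.prod_nonneg fun i _ => by linarith [(ha i).2]
      have hsumnn : 0 ≤ ∑ i ∈ Finset.Ico n m, c i :=
        Finset.sum_nonneg fun i _ => hc i
      have h2 : (1 - a m) * s m ≤ (1 - a m) *
          ((∏ i ∈ Finset.Ico n m, (1 - a i)) * s n + ∑ i ∈ Finset.Ico n m, c i) :=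
        mul_le_mul_of_nonneg_left ih (by linarith [ha'.2])
      nlinarith [ha'.1, ha'.2, hs n, mul_nonneg hprodnn (hs n)]
  have hpe : ∀ n m, (∏ i ∈ Finset.Ico n m, (1 - a i)) ≤
      Real.exp (-(∑ i ∈ Finset.Ico n m, a i)) := by
    intro n m
    have : Real.exp (-(∑ i ∈ Finset.Ico n m, a i)) = ∏ i ∈ Finset.Ico n m,
        Real.exp (-(a i)) := by
      rw [← Real.exp_sum, ← Finset.sum_neg_distrib]
    rw [this]
    refine Finset.prod_le_prod (fun i _ => by linarith [(ha i).2]) (fun i _ => ?_)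
    linarith [Real.add_one_le_exp (-(a i))]
  rw [Metric.tendsto_atTop]
  intro ε hε
  -- choose N with tail of c small
  have htail : Filter.Tendsto (fun N => ∑' k, c (k + N)) Filter.atTop (nhds 0) :=
    tendsto_sum_nat_add c
  obtain ⟨N, hN⟩ := (Filter.eventually_atTop).mp
    (htail.eventually_lt_const (by linarith : (0:ℝ) < ε / 2))
  set N₀ := N
  have htailN : ∑' k, c (k + N₀) < ε / 2 := hN N₀ le_rfl
  have hsumc : ∀ m, N₀ ≤ m → ∑ i ∈ Finset.Ico N₀ m, c i ≤ ∑' k, c (k + N₀) := by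
    intro m hm
    rw [Finset.sum_Ico_eq_sum_range]
    have hsum : Summable fun k => c (k + N₀) := (summable_nat_add_iff N₀).mpr hconv
    calc ∑ i ∈ Finset.range (m - N₀), c (N₀ + i)
        = ∑ i ∈ Finset.range (m - N₀), c (i + N₀) := by
          refine Finset.sum_congr rfl fun i _ => by rw [Nat.add_comm]
      _ ≤ ∑' k, c (k + N₀) := Summable.sum_le_tsum _ (fun i _ => hc _) hsum
  -- the exponential factor tends to 0
  have hIco : Filter.Tendsto (fun m => ∑ i ∈ Finset.Ico N₀ m, a i) Filter.atTop
      Filter.atTop := by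
    have h1 : Filter.Tendsto (fun m => (∑ i ∈ Finset.range m, a i)
        + -(∑ i ∈ Finset.range N₀, a i)) Filter.atTop Filter.atTop :=
      Filter.tendsto_atTop_add_const_right _ _ hdiv
    refine Filter.Tendsto.congr' ?_ h1
    filter_upwards [Filter.eventually_ge_atTop N₀] with m hm
    rw [Finset.sum_Ico_eq_sub _ hm]; ring
  have hexp : Filter.Tendsto
      (fun m => Real.exp (-(∑ i ∈ Finset.Ico N₀ m, a i)) * s N₀)
      Filter.atTop (nhds 0) := by
    have := (Real.tendsto_exp_neg_atTop_nhds_zero.comp hIco).mul_const (s N₀)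
    simpa using this
  obtain ⟨M, hM⟩ := Filter.eventually_atTop.mp
    (hexp.eventually_lt_const (by linarith : (0:ℝ) < ε / 2))
  refine ⟨max N₀ M, fun m hm => ?_⟩
  have hmN : N₀ ≤ m := le_trans (le_max_left _ _) hm
  have hmM : M ≤ m := le_trans (le_max_right _ _) hm
  have h1 := key N₀ m hmN
  have hprodnn : 0 ≤ ∏ i ∈ Finset.Ico N₀ m, (1 - a i) :=
    Finset.prod_nonneg fun i _ => by linarith [(ha i).2]
  have h2 : (∏ i ∈ Finset.Ico N₀ m, (1 - a i)) * s N₀ ≤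
      Real.exp (-(∑ i ∈ Finset.Ico N₀ m, a i)) * s N₀ :=
    mul_le_mul_of_nonneg_right (hpe N₀ m) (hs N₀)
  have h3 := hM m hmM
  have h4 := hsumc m hmN
  rw [Real.dist_eq, sub_zero, abs_of_nonneg (hs m)]
  linarith
end

section
/- Let X be a normed space, C ⊆ X convex, T, U : C → C nonexpansive with a common fixed point p, u, x₀ ∈ C, (α_n), (β_n) ⊆ [0,1], and define y_n = (1-α_n) T x_n + α_n u, x_{n+1} = (1-β_n) U y_n + β_n y_n. Set M_p = max{‖x₀ - p‖, ‖u - p‖}. Then for all n ∈ ℕ: ‖x_n - p‖ ≤ M_p and ‖y_n - p‖ ≤ M_p. -/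
theorem ahm_bounded {X : Type*} [NormedAddCommGroup X] [NormedSpace ℝ X]
    (C : Set X) (hC : Convex ℝ C) (T U : X → X)
    (hTC : Set.MapsTo T C C) (hUC : Set.MapsTo U C C)
    (hT : ∀ a ∈ C, ∀ b ∈ C, ‖T a - T b‖ ≤ ‖a - b‖)
    (hU : ∀ a ∈ C, ∀ b ∈ C, ‖U a - U b‖ ≤ ‖a - b‖)
    (u : X) (hu : u ∈ C)
    (α β : ℕ → ℝ) (hα : ∀ n, α n ∈ Set.Icc (0:ℝ) 1) (hβ : ∀ n, β n ∈ Set.Icc (0:ℝ) 1)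
    (x y : ℕ → X) (hx0 : x 0 ∈ C)
    (hy : ∀ n, y n = (1 - α n) • T (x n) + α n • u)
    (hx : ∀ n, x (n + 1) = (1 - β n) • U (y n) + β n • y n)
    (p : X) (hp : p ∈ C) (hTp : T p = p) (hUp : U p = p) :
    ∀ n, ‖x n - p‖ ≤ max ‖x 0 - p‖ ‖u - p‖ ∧ ‖y n - p‖ ≤ max ‖x 0 - p‖ ‖u - p‖ := by
  set M := max ‖x 0 - p‖ ‖u - p‖ with hM
  have key : ∀ (a b : X) (t : ℝ), 0 ≤ t → t ≤ 1 → ‖a - p‖ ≤ M → ‖b - p‖ ≤ M →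
      ‖((1 - t) • a + t • b) - p‖ ≤ M := by
    intro a b t ht0 ht1 ha hb
    have heq : (1 - t) • a + t • b - p = (1 - t) • (a - p) + t • (b - p) := by
      module
    rw [heq]
    calc ‖(1 - t) • (a - p) + t • (b - p)‖ ≤ (1 - t) * ‖a - p‖ + t * ‖b - p‖ := by
          refine (norm_add_le _ _).trans ?_
          rw [norm_smul, norm_smul, Real.norm_of_nonneg (by linarith), Real.norm_of_nonneg ht0]
      _ ≤ (1 - t) * M + t * M := by
          have h1 : (0:ℝ) ≤ 1 - t := by linarith
          gcongr
      _ = M := by ring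
  have main : ∀ n, x n ∈ C ∧ ‖x n - p‖ ≤ M := by
    intro n
    induction n with
    | zero => exact ⟨hx0, le_max_left _ _⟩
    | succ n ih =>
      have hα0 := (hα n).1
      have hα1 := (hα n).2
      have hβ0 := (hβ n).1
      have hβ1 := (hβ n).2
      have hyC : y n ∈ C := by
        rw [hy n]
        exact hC (hTC ih.1) hu (by linarith) hα0 (by ring)
      have hTb : ‖T (x n) - p‖ ≤ M := by
        calc ‖T (x n) - p‖ = ‖T (x n) - T p‖ := by rw [hTp]
          _ ≤ ‖x n - p‖ := hT _ ih.1 _ hp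
          _ ≤ M := ih.2
      have hyB : ‖y n - p‖ ≤ M := by
        rw [hy n]; exact key _ _ _ hα0 hα1 hTb (le_max_right _ _)
      have hUb : ‖U (y n) - p‖ ≤ M := by
        calc ‖U (y n) - p‖ = ‖U (y n) - U p‖ := by rw [hUp]
          _ ≤ ‖y n - p‖ := hU _ hyC _ hp
          _ ≤ M := hyB
      refine ⟨?_, ?_⟩
      · rw [hx n]
        exact hC (hUC hyC) hyC (by linarith) hβ0 (by ring)
      · rw [hx n]; exact key _ _ _ hβ0 hβ1 hUb hyB
  intro n
  have hxn := main n
  refine ⟨hxn.2, ?_⟩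
  have hTb : ‖T (x n) - p‖ ≤ M := by
    calc ‖T (x n) - p‖ = ‖T (x n) - T p‖ := by rw [hTp]
      _ ≤ ‖x n - p‖ := hT _ hxn.1 _ hp
      _ ≤ M := hxn.2
  rw [hy n]; exact key _ _ _ (hα n).1 (hα n).2 hTb (le_max_right _ _)
end

section
/- Let X be a normed space, C ⊆ X convex, T, U : C → C nonexpansive with common fixed point p, u, x₀ ∈ C, (α_n), (β_n) ⊆ [0,1], and y_n = (1-α_n) T x_n + α_n u, x_{n+1} = (1-β_n) U y_n + β_n y_n. With M_p = max{‖x₀-p‖, ‖u-p‖}, for all n: ‖x_{n+2} - x_{n+1}‖ ≤ (1-α_{n+1})·‖x_{n+1} - x_n‖ + 2M_p(|α_{n+1} - α_n| + |β_{n+1} - β_n|). -/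
theorem ahm_key_ineq {X : Type*} [NormedAddCommGroup X] [NormedSpace ℝ X]
    (C : Set X) (hC : Convex ℝ C) (T U : X → X)
    (hTC : Set.MapsTo T C C) (hUC : Set.MapsTo U C C)
    (hT : ∀ a ∈ C, ∀ b ∈ C, ‖T a - T b‖ ≤ ‖a - b‖)
    (hU : ∀ a ∈ C, ∀ b ∈ C, ‖U a - U b‖ ≤ ‖a - b‖)
    (u : X) (hu : u ∈ C)
    (α β : ℕ → ℝ) (hα : ∀ n, α n ∈ Set.Icc (0:ℝ) 1) (hβ : ∀ n, β n ∈ Set.Icc (0:ℝ) 1)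
    (x y : ℕ → X) (hx0 : x 0 ∈ C)
    (hy : ∀ n, y n = (1 - α n) • T (x n) + α n • u)
    (hx : ∀ n, x (n + 1) = (1 - β n) • U (y n) + β n • y n)
    (p : X) (hp : p ∈ C) (hTp : T p = p) (hUp : U p = p) :
    ∀ n, ‖x (n + 2) - x (n + 1)‖ ≤
      (1 - α (n + 1)) * ‖x (n + 1) - x n‖ +
        2 * max ‖x 0 - p‖ ‖u - p‖ * (|α (n + 1) - α n| + |β (n + 1) - β n|) := by
  set M : ℝ := max ‖x 0 - p‖ ‖u - p‖ with hM
  have hup : ‖u - p‖ ≤ M := le_max_right _ _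
  -- x n ∈ C and ‖x n - p‖ ≤ M, plus y n ∈ C and ‖y n - p‖ ≤ M
  have key : ∀ n, (x n ∈ C ∧ ‖x n - p‖ ≤ M) ∧ (y n ∈ C ∧ ‖y n - p‖ ≤ M) := by
    intro n
    induction n with
    | zero =>
      have hxC : x 0 ∈ C := hx0
      have hxb : ‖x 0 - p‖ ≤ M := le_max_left _ _
      refine ⟨⟨hxC, hxb⟩, ?_⟩
      obtain ⟨ha0, ha1⟩ := hα 0
      constructor
      · rw [hy]
        exact hC (hTC hxC) hu (by linarith) ha0 (by ring)
      · rw [hy]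
        have h1 : (1 - α 0) • T (x 0) + α 0 • u - p
            = (1 - α 0) • (T (x 0) - p) + α 0 • (u - p) := by
          module
        rw [h1]
        calc ‖(1 - α 0) • (T (x 0) - p) + α 0 • (u - p)‖
            ≤ ‖(1 - α 0) • (T (x 0) - p)‖ + ‖α 0 • (u - p)‖ := norm_add_le _ _
          _ = (1 - α 0) * ‖T (x 0) - p‖ + α 0 * ‖u - p‖ := by
              rw [norm_smul, norm_smul, Real.norm_eq_abs, Real.norm_eq_abs,
                abs_of_nonneg (by linarith), abs_of_nonneg ha0]
          _ ≤ (1 - α 0) * ‖x 0 - p‖ + α 0 * ‖u - p‖ := by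
              have := hT (x 0) hxC p hp
              rw [hTp] at this
              nlinarith
          _ ≤ (1 - α 0) * M + α 0 * M := by nlinarith
          _ = M := by ring
    | succ n ih =>
      obtain ⟨⟨_, _⟩, hyC, hyb⟩ := ih
      obtain ⟨hb0, hb1⟩ := hβ n
      have hxC : x (n + 1) ∈ C := by
        rw [hx]
        exact hC (hUC hyC) hyC (by linarith) hb0 (by ring)
      have hxb : ‖x (n + 1) - p‖ ≤ M := by
        rw [hx]
        have h1 : (1 - β n) • U (y n) + β n • y n - p
            = (1 - β n) • (U (y n) - p) + β n • (y n - p) := by module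
        rw [h1]
        calc ‖(1 - β n) • (U (y n) - p) + β n • (y n - p)‖
            ≤ ‖(1 - β n) • (U (y n) - p)‖ + ‖β n • (y n - p)‖ := norm_add_le _ _
          _ = (1 - β n) * ‖U (y n) - p‖ + β n * ‖y n - p‖ := by
              rw [norm_smul, norm_smul, Real.norm_eq_abs, Real.norm_eq_abs,
                abs_of_nonneg (by linarith), abs_of_nonneg hb0]
          _ ≤ (1 - β n) * ‖y n - p‖ + β n * ‖y n - p‖ := by
              have := hU (y n) hyC p hp
              rw [hUp] at this
              nlinarith
          _ ≤ M := by nlinarith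
      refine ⟨⟨hxC, hxb⟩, ?_⟩
      obtain ⟨ha0, ha1⟩ := hα (n + 1)
      constructor
      · rw [hy]
        exact hC (hTC hxC) hu (by linarith) ha0 (by ring)
      · rw [hy]
        have h1 : (1 - α (n+1)) • T (x (n+1)) + α (n+1) • u - p
            = (1 - α (n+1)) • (T (x (n+1)) - p) + α (n+1) • (u - p) := by module
        rw [h1]
        calc ‖(1 - α (n+1)) • (T (x (n+1)) - p) + α (n+1) • (u - p)‖
            ≤ ‖(1 - α (n+1)) • (T (x (n+1)) - p)‖ + ‖α (n+1) • (u - p)‖ := norm_add_le _ _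
          _ = (1 - α (n+1)) * ‖T (x (n+1)) - p‖ + α (n+1) * ‖u - p‖ := by
              rw [norm_smul, norm_smul, Real.norm_eq_abs, Real.norm_eq_abs,
                abs_of_nonneg (by linarith), abs_of_nonneg ha0]
          _ ≤ (1 - α (n+1)) * ‖x (n+1) - p‖ + α (n+1) * ‖u - p‖ := by
              have := hT (x (n+1)) hxC p hp
              rw [hTp] at this
              nlinarith
          _ ≤ M := by nlinarith
  intro n
  obtain ⟨⟨hxnC, hxnb⟩, hynC, hynb⟩ := key n
  obtain ⟨⟨hx1C, hx1b⟩, hy1C, hy1b⟩ := key (n + 1)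
  obtain ⟨ha0, ha1⟩ := hα (n + 1)
  obtain ⟨hb0, hb1⟩ := hβ (n + 1)
  -- bound ‖u - T (x n)‖ ≤ 2M
  have hTn : ‖T (x n) - p‖ ≤ M := by
    have := hT (x n) hxnC p hp
    rw [hTp] at this; linarith
  have hbound1 : ‖u - T (x n)‖ ≤ 2 * M := by
    have h1 : u - T (x n) = (u - p) - (T (x n) - p) := by abel
    rw [h1]
    calc ‖(u - p) - (T (x n) - p)‖ ≤ ‖u - p‖ + ‖T (x n) - p‖ := norm_sub_le _ _
      _ ≤ 2 * M := by linarith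
  have hUyn : ‖U (y n) - p‖ ≤ M := by
    have := hU (y n) hynC p hp
    rw [hUp] at this; linarith
  have hbound2 : ‖y n - U (y n)‖ ≤ 2 * M := by
    have h1 : y n - U (y n) = (y n - p) - (U (y n) - p) := by abel
    rw [h1]
    calc ‖(y n - p) - (U (y n) - p)‖ ≤ ‖y n - p‖ + ‖U (y n) - p‖ := norm_sub_le _ _
      _ ≤ 2 * M := by linarith
  -- estimate for y differences
  have hyd : ‖y (n + 1) - y n‖ ≤ (1 - α (n+1)) * ‖x (n+1) - x n‖ + 2 * M * |α (n+1) - α n| := by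
    have h1 : y (n + 1) - y n = (1 - α (n+1)) • (T (x (n+1)) - T (x n))
        + (α (n+1) - α n) • (u - T (x n)) := by
      rw [hy, hy]; module
    rw [h1]
    calc ‖(1 - α (n+1)) • (T (x (n+1)) - T (x n)) + (α (n+1) - α n) • (u - T (x n))‖
        ≤ ‖(1 - α (n+1)) • (T (x (n+1)) - T (x n))‖ + ‖(α (n+1) - α n) • (u - T (x n))‖ :=
          norm_add_le _ _
      _ = (1 - α (n+1)) * ‖T (x (n+1)) - T (x n)‖ + |α (n+1) - α n| * ‖u - T (x n)‖ := by
          rw [norm_smul, norm_smul, Real.norm_eq_abs, Real.norm_eq_abs,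
            abs_of_nonneg (by linarith)]
      _ ≤ (1 - α (n+1)) * ‖x (n+1) - x n‖ + 2 * M * |α (n+1) - α n| := by
          have h2 := hT (x (n+1)) hx1C (x n) hxnC
          have h3 : |α (n+1) - α n| * ‖u - T (x n)‖ ≤ |α (n+1) - α n| * (2 * M) :=
            mul_le_mul_of_nonneg_left hbound1 (abs_nonneg _)
          nlinarith
  -- estimate for x differences
  have hxd : x (n + 2) - x (n + 1) = (1 - β (n+1)) • (U (y (n+1)) - U (y n))
      + β (n+1) • (y (n+1) - y n) + (β (n+1) - β n) • (y n - U (y n)) := by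
    rw [hx, hx]; module
  rw [hxd]
  have hUd : ‖U (y (n+1)) - U (y n)‖ ≤ ‖y (n+1) - y n‖ := hU _ hy1C _ hynC
  calc ‖(1 - β (n+1)) • (U (y (n+1)) - U (y n)) + β (n+1) • (y (n+1) - y n)
        + (β (n+1) - β n) • (y n - U (y n))‖
      ≤ ‖(1 - β (n+1)) • (U (y (n+1)) - U (y n))‖ + ‖β (n+1) • (y (n+1) - y n)‖
        + ‖(β (n+1) - β n) • (y n - U (y n))‖ :=
        (norm_add_le _ _).trans (by gcongr; exact norm_add_le _ _)
    _ = (1 - β (n+1)) * ‖U (y (n+1)) - U (y n)‖ + β (n+1) * ‖y (n+1) - y n‖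
        + |β (n+1) - β n| * ‖y n - U (y n)‖ := by
        rw [norm_smul, norm_smul, norm_smul, Real.norm_eq_abs, Real.norm_eq_abs,
          Real.norm_eq_abs, abs_of_nonneg (by linarith), abs_of_nonneg hb0]
    _ ≤ ‖y (n+1) - y n‖ + 2 * M * |β (n+1) - β n| := by
        have h3 : |β (n+1) - β n| * ‖y n - U (y n)‖ ≤ |β (n+1) - β n| * (2 * M) :=
          mul_le_mul_of_nonneg_left hbound2 (abs_nonneg _)
        nlinarith
    _ ≤ (1 - α (n + 1)) * ‖x (n + 1) - x n‖ +
        2 * M * (|α (n + 1) - α n| + |β (n + 1) - β n|) := by nlinarith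
end

section
/- Let X be a normed space, C ⊆ X convex, T, U : C → C nonexpansive with common fixed point p, u, x₀ ∈ C. Take α_n = 2/(n+2) and β_n = β ∈ (0,1) constant, and define y_n = (1-α_n) T x_n + α_n u, x_{n+1} = (1-β) U y_n + β y_n. Let K be a positive real with K ≥ max{‖x₀-p‖, ‖u-p‖}. Then for all n ∈ ℕ: ‖x_n - x_{n+1}‖ ≤ 4K/(n+2). -/
/-!
Both sequences stay in `C ∩ closedBall p K`, since `T` and `U` fix `p` and this set is convex.
Comparing consecutive steps, the Mann step is nonexpansive and the Halpern step contracts by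
`1 - αₙ₊₁` up to an error `(αₙ - αₙ₊₁) ‖u - T xₙ‖ ≤ (αₙ - αₙ₊₁) 2K`. For `αₙ = 2/(n+2)` the
resulting recursion `aₙ₊₁ ≤ (1 - αₙ₊₁) aₙ + (αₙ - αₙ₊₁) L` is solved exactly by `aₙ = L αₙ`.
-/

open Set Metric

lemma norm_sub_le_of_mem_closedBall {E : Type*} [NormedAddCommGroup E] {p a b : E} {r : ℝ}
    (ha : a ∈ closedBall p r) (hb : b ∈ closedBall p r) : ‖a - b‖ ≤ 2 * r := by
  rw [← dist_eq_norm, two_mul]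
  exact (dist_triangle_right a b p).trans (add_le_add ha hb)

lemma mapsTo_inter_closedBall_of_nonexpansive {E : Type*} [NormedAddCommGroup E] {C : Set E}
    {T : E → E} (hTC : MapsTo T C C) (hT : ∀ a ∈ C, ∀ b ∈ C, ‖T a - T b‖ ≤ ‖a - b‖)
    {p : E} (hp : p ∈ C) (hTp : T p = p) (r : ℝ) :
    MapsTo T (C ∩ closedBall p r) (C ∩ closedBall p r) := by
  rintro z ⟨hzC, hzr⟩
  refine ⟨hTC hzC, ?_⟩
  rw [mem_closedBall, dist_eq_norm] at hzr ⊢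
  calc ‖T z - p‖ = ‖T z - T p‖ := by rw [hTp]
    _ ≤ ‖z - p‖ := hT z hzC p hp
    _ ≤ r := hzr

section ConvexCombination

variable {E : Type*} [NormedAddCommGroup E] [NormedSpace ℝ E]

lemma norm_smul_add_smul_le {s t : ℝ} (hs : 0 ≤ s) (ht : 0 ≤ t) (a b : E) :
    ‖s • a + t • b‖ ≤ s * ‖a‖ + t * ‖b‖ :=
  (norm_add_le _ _).trans_eq (by rw [norm_smul_of_nonneg hs, norm_smul_of_nonneg ht])

lemma norm_convexComb_sub_convexComb_le {t : ℝ} (ht0 : 0 ≤ t) (ht1 : t ≤ 1) (a a' b b' : E) :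
    ‖((1 - t) • a + t • b) - ((1 - t) • a' + t • b')‖ ≤ (1 - t) * ‖a - a'‖ + t * ‖b - b'‖ := by
  have h : ((1 - t) • a + t • b) - ((1 - t) • a' + t • b')
      = (1 - t) • (a - a') + t • (b - b') := by module
  exact h ▸ norm_smul_add_smul_le (by linarith) ht0 _ _

lemma norm_halpern_sub_halpern_le {s t : ℝ} (ht1 : t ≤ 1) (hts : t ≤ s) (a b u : E) :
    ‖((1 - s) • a + s • u) - ((1 - t) • b + t • u)‖ ≤ (1 - t) * ‖a - b‖ + (s - t) * ‖u - a‖ := by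
  have h : ((1 - s) • a + s • u) - ((1 - t) • b + t • u)
      = (1 - t) • (a - b) + (s - t) • (u - a) := by module
  exact h ▸ norm_smul_add_smul_le (by linarith) (by linarith) _ _

end ConvexCombination

section HalpernMann

variable {E : Type*} [NormedAddCommGroup E] [NormedSpace ℝ E]
  {T U : E → E} {u : E} {α : ℕ → ℝ} {β : ℝ} {x y : ℕ → E}

lemma halpernMann_mem {S : Set E} (hS : Convex ℝ S) (hTS : MapsTo T S S) (hUS : MapsTo U S S)
    (hu : u ∈ S) (hα : ∀ n, α n ∈ Icc 0 1) (hβ : β ∈ Icc 0 1)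
    (hy : ∀ n, y n = (1 - α n) • T (x n) + α n • u)
    (hx : ∀ n, x (n + 1) = (1 - β) • U (y n) + β • y n)
    (hx0 : x 0 ∈ S) (n : ℕ) : x n ∈ S ∧ y n ∈ S := by
  have hyS : ∀ n, x n ∈ S → y n ∈ S := fun n hxn =>
    hy n ▸ hS (hTS hxn) hu (by linarith [(hα n).2]) (hα n).1 (by ring)
  induction n with
  | zero => exact ⟨hx0, hyS 0 hx0⟩
  | succ n ih =>
    have hxS : x (n + 1) ∈ S :=
      hx n ▸ hS (hUS ih.2) ih.2 (by linarith [hβ.2]) hβ.1 (by ring)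
    exact ⟨hxS, hyS _ hxS⟩

lemma halpernMann_norm_sub_succ_le {C : Set E}
    (hT : ∀ a ∈ C, ∀ b ∈ C, ‖T a - T b‖ ≤ ‖a - b‖) (hU : ∀ a ∈ C, ∀ b ∈ C, ‖U a - U b‖ ≤ ‖a - b‖)
    (hxC : ∀ n, x n ∈ C) (hyC : ∀ n, y n ∈ C) (hα1 : ∀ n, α n ≤ 1) (hα : Antitone α)
    (hβ : β ∈ Icc 0 1)
    (hy : ∀ n, y n = (1 - α n) • T (x n) + α n • u)
    (hx : ∀ n, x (n + 1) = (1 - β) • U (y n) + β • y n)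
    (n : ℕ) :
    ‖x (n + 1) - x (n + 2)‖ ≤
      (1 - α (n + 1)) * ‖x n - x (n + 1)‖ + (α n - α (n + 1)) * ‖u - T (x n)‖ := by
  have hα_le : α (n + 1) ≤ α n := hα n.le_succ
  calc ‖x (n + 1) - x (n + 2)‖
      ≤ (1 - β) * ‖U (y n) - U (y (n + 1))‖ + β * ‖y n - y (n + 1)‖ := by
        rw [hx n, hx (n + 1)]
        exact norm_convexComb_sub_convexComb_le hβ.1 hβ.2 _ _ _ _
    _ ≤ (1 - β) * ‖y n - y (n + 1)‖ + β * ‖y n - y (n + 1)‖ := by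
        gcongr
        · linarith [hβ.2]
        · exact hU _ (hyC n) _ (hyC (n + 1))
    _ = ‖y n - y (n + 1)‖ := by ring
    _ ≤ (1 - α (n + 1)) * ‖T (x n) - T (x (n + 1))‖ + (α n - α (n + 1)) * ‖u - T (x n)‖ := by
        rw [hy n, hy (n + 1)]
        exact norm_halpern_sub_halpern_le (hα1 _) hα_le _ _ _
    _ ≤ (1 - α (n + 1)) * ‖x n - x (n + 1)‖ + (α n - α (n + 1)) * ‖u - T (x n)‖ := by
        gcongr
        · linarith [hα1 (n + 1)]
        · exact hT _ (hxC n) _ (hxC (n + 1))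

end HalpernMann

lemma two_div_natCast_add_two_mem_Icc (n : ℕ) : 2 / ((n : ℝ) + 2) ∈ Icc 0 1 :=
  ⟨by positivity, (div_le_one (by positivity)).2 (by linarith [n.cast_nonneg (α := ℝ)])⟩

lemma le_of_halpern_recursion {a : ℕ → ℝ} {L : ℝ} (h0 : a 0 ≤ L)
    (hrec : ∀ n : ℕ, a (n + 1) ≤ (1 - 2 / ((n + 1 : ℕ) + 2 : ℝ)) * a n
      + (2 / ((n : ℝ) + 2) - 2 / ((n + 1 : ℕ) + 2 : ℝ)) * L) (n : ℕ) :
    a n ≤ 2 * L / ((n : ℝ) + 2) := by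
  induction n with
  | zero => simpa using h0
  | succ n ih =>
    have hcoef : 0 ≤ 1 - 2 / ((n + 1 : ℕ) + 2 : ℝ) :=
      sub_nonneg.2 (two_div_natCast_add_two_mem_Icc (n + 1)).2
    calc a (n + 1) ≤ (1 - 2 / ((n + 1 : ℕ) + 2 : ℝ)) * (2 * L / ((n : ℝ) + 2))
          + (2 / ((n : ℝ) + 2) - 2 / ((n + 1 : ℕ) + 2 : ℝ)) * L := by
          grw [hrec n, mul_le_mul_of_nonneg_left ih hcoef]
      _ = 2 * L / ((n + 1 : ℕ) + 2 : ℝ) := by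
          push_cast
          field_simp
          ring

lemma antitone_two_div_natCast_add_two : Antitone fun n : ℕ => 2 / ((n : ℝ) + 2) :=
  fun _ _ hmn => div_le_div_of_nonneg_left zero_le_two (by positivity) (by gcongr)

theorem ahm_linear_rate_x_general {X : Type*} [NormedAddCommGroup X] [NormedSpace ℝ X]
    (C : Set X) (hC : Convex ℝ C) (T U : X → X)
    (hTC : Set.MapsTo T C C) (hUC : Set.MapsTo U C C)
    (hT : ∀ a ∈ C, ∀ b ∈ C, ‖T a - T b‖ ≤ ‖a - b‖)
    (hU : ∀ a ∈ C, ∀ b ∈ C, ‖U a - U b‖ ≤ ‖a - b‖)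
    (u : X) (hu : u ∈ C)
    (p : X) (hp : p ∈ C) (hTp : T p = p) (hUp : U p = p)
    (β : ℝ) (hβ : β ∈ Set.Ioo (0:ℝ) 1)
    (x y : ℕ → X) (hx0 : x 0 ∈ C)
    (hy : ∀ n : ℕ, y n = (1 - 2 / ((n : ℝ) + 2)) • T (x n) + (2 / ((n : ℝ) + 2)) • u)
    (hx : ∀ n : ℕ, x (n + 1) = (1 - β) • U (y n) + β • y n)
    (K : ℝ) (hK : max ‖x 0 - p‖ ‖u - p‖ ≤ K)
 :
    ∀ n : ℕ, ‖x n - x (n + 1)‖ ≤ 4 * K / ((n : ℝ) + 2) := by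
  have hβ' : β ∈ Icc 0 1 := Ioo_subset_Icc_self hβ
  have hTS := mapsTo_inter_closedBall_of_nonexpansive hTC hT hp hTp K
  have huS : u ∈ C ∩ closedBall p K := ⟨hu, mem_closedBall_iff_norm.2 (le_of_max_le_right hK)⟩
  have hmem := halpernMann_mem (hC.inter (convex_closedBall p K)) hTS
    (mapsTo_inter_closedBall_of_nonexpansive hUC hU hp hUp K) huS two_div_natCast_add_two_mem_Icc
    hβ' hy hx ⟨hx0, mem_closedBall_iff_norm.2 (le_of_max_le_left hK)⟩
  intro n
  rw [show 4 * K = 2 * (2 * K) by ring]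
  refine le_of_halpern_recursion (a := fun n => ‖x n - x (n + 1)‖)
    (norm_sub_le_of_mem_closedBall (hmem 0).1.2 (hmem 1).1.2) (fun n => ?_) n
  refine (halpernMann_norm_sub_succ_le hT hU (fun n => (hmem n).1.1) (fun n => (hmem n).2.1)
    (fun n => (two_div_natCast_add_two_mem_Icc n).2) antitone_two_div_natCast_add_two hβ' hy hx
    n).trans ?_
  gcongr
  · exact sub_nonneg.2 (antitone_two_div_natCast_add_two n.le_succ)
  · exact norm_sub_le_of_mem_closedBall huS.2 (hTS (hmem n).1).2

theorem ahm_linear_rate_x {X : Type*} [NormedAddCommGroup X] [NormedSpace ℝ X]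
    (C : Set X) (hC : Convex ℝ C) (T U : X → X)
    (hTC : Set.MapsTo T C C) (hUC : Set.MapsTo U C C)
    (hT : ∀ a ∈ C, ∀ b ∈ C, ‖T a - T b‖ ≤ ‖a - b‖)
    (hU : ∀ a ∈ C, ∀ b ∈ C, ‖U a - U b‖ ≤ ‖a - b‖)
    (u : X) (hu : u ∈ C)
    (p : X) (hp : p ∈ C) (hTp : T p = p) (hUp : U p = p)
    (β : ℝ) (hβ : β ∈ Set.Ioo (0:ℝ) 1)
    (x y : ℕ → X) (hx0 : x 0 ∈ C)
    (hy : ∀ n : ℕ, y n = (1 - 2 / ((n : ℝ) + 2)) • T (x n) + (2 / ((n : ℝ) + 2)) • u)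
    (hx : ∀ n : ℕ, x (n + 1) = (1 - β) • U (y n) + β • y n)
    (K : ℝ) (hK0 : 0 < K) (hK : max ‖x 0 - p‖ ‖u - p‖ ≤ K)
 :
    ∀ n : ℕ, ‖x n - x (n + 1)‖ ≤ 4 * K / ((n : ℝ) + 2) :=
  ahm_linear_rate_x_general C hC T U hTC hUC hT hU u hu p hp hTp hUp β hβ x y hx0 hy hx K hK
end

section
/- Let X be a normed space, C ⊆ X convex, T, U : C → C nonexpansive with common fixed point p, u, x₀ ∈ C, α_n = 2/(n+2), β_n = β ∈ (0,1), and y_n = (1-α_n) T x_n + α_n u, x_{n+1} = (1-β) U y_n + β y_n. Let K ≥ max{‖x₀-p‖, ‖u-p‖} with K > 0. Then for all n ∈ ℕ: ‖y_n - y_{n+1}‖ ≤ 4K/(n+3). -/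
theorem ahm_linear_rate_y {X : Type*} [NormedAddCommGroup X] [NormedSpace ℝ X]
    (C : Set X) (hC : Convex ℝ C) (T U : X → X)
    (hTC : Set.MapsTo T C C) (hUC : Set.MapsTo U C C)
    (hT : ∀ a ∈ C, ∀ b ∈ C, ‖T a - T b‖ ≤ ‖a - b‖)
    (hU : ∀ a ∈ C, ∀ b ∈ C, ‖U a - U b‖ ≤ ‖a - b‖)
    (u : X) (hu : u ∈ C)
    (p : X) (hp : p ∈ C) (hTp : T p = p) (hUp : U p = p)
    (β : ℝ) (hβ : β ∈ Set.Ioo (0:ℝ) 1)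
    (x y : ℕ → X) (hx0 : x 0 ∈ C)
    (hy : ∀ n : ℕ, y n = (1 - 2 / ((n : ℝ) + 2)) • T (x n) + (2 / ((n : ℝ) + 2)) • u)
    (hx : ∀ n : ℕ, x (n + 1) = (1 - β) • U (y n) + β • y n)
    (K : ℝ) (hK0 : 0 < K) (hK : max ‖x 0 - p‖ ‖u - p‖ ≤ K)
 :
    ∀ n : ℕ, ‖y n - y (n + 1)‖ ≤ 4 * K / ((n : ℝ) + 3) := by
  obtain ⟨hβ0, hβ1⟩ := hβ
  set α : ℕ → ℝ := fun n => 2 / ((n : ℝ) + 2) with hα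
  have hα0 : ∀ n : ℕ, 0 ≤ α n := by
    intro n; simp only [hα]; positivity
  have hα1 : ∀ n : ℕ, α n ≤ 1 := by
    intro n; simp only [hα]
    rw [div_le_one (by positivity)]
    have : (0:ℝ) ≤ (n:ℝ) := Nat.cast_nonneg n
    linarith
  have key : ∀ (t : ℝ) (a b c d : X), 0 ≤ t → t ≤ 1 →
      ‖((1-t)•a + t•b) - ((1-t)•c + t•d)‖ ≤ (1-t)*‖a-c‖ + t*‖b-d‖ := by
    intro t a b c d ht0 ht1
    have h : ((1-t)•a + t•b) - ((1-t)•c + t•d) = (1-t)•(a-c) + t•(b-d) := by module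
    rw [h]
    calc ‖(1-t)•(a-c) + t•(b-d)‖ ≤ ‖(1-t)•(a-c)‖ + ‖t•(b-d)‖ := norm_add_le _ _
      _ = (1-t)*‖a-c‖ + t*‖b-d‖ := by
          rw [norm_smul, norm_smul, Real.norm_eq_abs, Real.norm_eq_abs,
            abs_of_nonneg (by linarith), abs_of_nonneg ht0]
  have huK : ‖u - p‖ ≤ K := le_trans (le_max_right _ _) hK
  have hyfact : ∀ n, x n ∈ C → ‖x n - p‖ ≤ K → (y n ∈ C ∧ ‖y n - p‖ ≤ K) := by
    intro n hxC hxK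
    have hTn : ‖T (x n) - p‖ ≤ K := by
      calc ‖T (x n) - p‖ = ‖T (x n) - T p‖ := by rw [hTp]
        _ ≤ ‖x n - p‖ := hT _ hxC _ hp
        _ ≤ K := hxK
    constructor
    · rw [hy n]
      exact hC (hTC hxC) hu (by linarith [hα1 n]) (hα0 n) (by ring)
    · rw [hy n]
      have hpp : (1 - α n) • p + α n • p = p := by module
      calc ‖(1 - 2/((n:ℝ)+2)) • T (x n) + (2/((n:ℝ)+2)) • u - p‖
          = ‖((1 - α n) • T (x n) + α n • u) - ((1 - α n) • p + α n • p)‖ := by rw [hpp]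
        _ ≤ (1 - α n)*‖T (x n) - p‖ + α n * ‖u - p‖ := key _ _ _ _ _ (hα0 n) (hα1 n)
        _ ≤ (1 - α n)*K + α n * K := by
            have h1 := hα0 n; have h2 := hα1 n
            have := mul_le_mul_of_nonneg_left hTn (by linarith : (0:ℝ) ≤ 1 - α n)
            have := mul_le_mul_of_nonneg_left huK h1
            linarith
        _ = K := by ring
  have hKx : ∀ n, x n ∈ C ∧ ‖x n - p‖ ≤ K := by
    intro n
    induction n with
    | zero => exact ⟨hx0, le_trans (le_max_left _ _) hK⟩
    | succ n ih =>
      obtain ⟨hxC, hxK⟩ := ih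
      obtain ⟨hyC, hyK⟩ := hyfact n hxC hxK
      have hUn : ‖U (y n) - p‖ ≤ K := by
        calc ‖U (y n) - p‖ = ‖U (y n) - U p‖ := by rw [hUp]
          _ ≤ ‖y n - p‖ := hU _ hyC _ hp
          _ ≤ K := hyK
      constructor
      · rw [hx n]
        exact hC (hUC hyC) hyC (by linarith) (le_of_lt hβ0) (by ring)
      · rw [hx n]
        have hpp : (1 - β) • p + β • p = p := by module
        calc ‖(1 - β) • U (y n) + β • y n - p‖
            = ‖((1 - β) • U (y n) + β • y n) - ((1 - β) • p + β • p)‖ := by rw [hpp]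
          _ ≤ (1 - β)*‖U (y n) - p‖ + β*‖y n - p‖ := key _ _ _ _ _ (le_of_lt hβ0) (le_of_lt hβ1)
          _ ≤ (1 - β)*K + β*K := by
              have := mul_le_mul_of_nonneg_left hUn (by linarith : (0:ℝ) ≤ 1 - β)
              have := mul_le_mul_of_nonneg_left hyK (le_of_lt hβ0)
              linarith
          _ = K := by ring
  have hyC : ∀ n, y n ∈ C := fun n => (hyfact n (hKx n).1 (hKx n).2).1
  have hTu : ∀ n, ‖T (x n) - u‖ ≤ 2*K := by
    intro n
    have hTn : ‖T (x n) - p‖ ≤ K := by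
      calc ‖T (x n) - p‖ = ‖T (x n) - T p‖ := by rw [hTp]
        _ ≤ ‖x n - p‖ := hT _ (hKx n).1 _ hp
        _ ≤ K := (hKx n).2
    calc ‖T (x n) - u‖ = ‖(T (x n) - p) - (u - p)‖ := by rw [sub_sub_sub_cancel_right]
      _ ≤ ‖T (x n) - p‖ + ‖u - p‖ := norm_sub_le _ _
      _ ≤ 2*K := by linarith
  have hαmono : ∀ n : ℕ, α (n+1) ≤ α n := by
    intro n
    simp only [hα]
    rw [div_le_div_iff₀ (by push_cast; positivity) (by positivity)]
    push_cast; linarith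
  have hstep : ∀ n : ℕ, ‖y (n+1) - y n‖ ≤
      (1 - α (n+1)) * ‖x (n+1) - x n‖ + (α n - α (n+1)) * (2*K) := by
    intro n
    have hmod : y (n+1) - y n
        = (1 - α (n+1)) • (T (x (n+1)) - T (x n)) + (α n - α (n+1)) • (T (x n) - u) := by
      rw [hy n, hy (n+1)]
      simp only [hα]
      push_cast
      module
    rw [hmod]
    have hTT : ‖T (x (n+1)) - T (x n)‖ ≤ ‖x (n+1) - x n‖ := hT _ (hKx (n+1)).1 _ (hKx n).1
    calc ‖(1 - α (n+1)) • (T (x (n+1)) - T (x n)) + (α n - α (n+1)) • (T (x n) - u)‖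
        ≤ ‖(1 - α (n+1)) • (T (x (n+1)) - T (x n))‖ + ‖(α n - α (n+1)) • (T (x n) - u)‖ :=
          norm_add_le _ _
      _ = (1 - α (n+1)) * ‖T (x (n+1)) - T (x n)‖ + (α n - α (n+1)) * ‖T (x n) - u‖ := by
          rw [norm_smul, norm_smul, Real.norm_eq_abs, Real.norm_eq_abs,
            abs_of_nonneg (by linarith [hα1 (n+1)]), abs_of_nonneg (by linarith [hαmono n])]
      _ ≤ (1 - α (n+1)) * ‖x (n+1) - x n‖ + (α n - α (n+1)) * (2*K) := by
          have h1 := mul_le_mul_of_nonneg_left hTT (by linarith [hα1 (n+1)] : (0:ℝ) ≤ 1 - α (n+1))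
          have h2 := mul_le_mul_of_nonneg_left (hTu n) (by linarith [hαmono n] : (0:ℝ) ≤ α n - α (n+1))
          linarith
  have hxdiff : ∀ n : ℕ, ‖x (n+2) - x (n+1)‖ ≤ ‖y (n+1) - y n‖ := by
    intro n
    have hmod : x (n+2) - x (n+1)
        = (1-β) • (U (y (n+1)) - U (y n)) + β • (y (n+1) - y n) := by
      rw [hx (n+1), hx n]; module
    rw [hmod]
    have hUU : ‖U (y (n+1)) - U (y n)‖ ≤ ‖y (n+1) - y n‖ := hU _ (hyC (n+1)) _ (hyC n)
    calc ‖(1-β) • (U (y (n+1)) - U (y n)) + β • (y (n+1) - y n)‖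
        ≤ ‖(1-β) • (U (y (n+1)) - U (y n))‖ + ‖β • (y (n+1) - y n)‖ := norm_add_le _ _
      _ = (1-β) * ‖U (y (n+1)) - U (y n)‖ + β * ‖y (n+1) - y n‖ := by
          rw [norm_smul, norm_smul, Real.norm_eq_abs, Real.norm_eq_abs,
            abs_of_nonneg (by linarith), abs_of_nonneg (le_of_lt hβ0)]
      _ ≤ (1-β) * ‖y (n+1) - y n‖ + β * ‖y (n+1) - y n‖ := by
          have := mul_le_mul_of_nonneg_left hUU (by linarith : (0:ℝ) ≤ 1 - β)
          linarith
      _ = ‖y (n+1) - y n‖ := by ring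
  intro n
  induction n with
  | zero =>
    rw [norm_sub_rev]
    have h := hstep 0
    have hα00 : α 0 = 1 := by norm_num [hα]
    have hα11 : α 1 = 2/3 := by norm_num [hα]
    have hx01 : ‖x 1 - x 0‖ ≤ 2*K := by
      calc ‖x 1 - x 0‖ = ‖(x 1 - p) - (x 0 - p)‖ := by rw [sub_sub_sub_cancel_right]
        _ ≤ ‖x 1 - p‖ + ‖x 0 - p‖ := norm_sub_le _ _
        _ ≤ 2*K := by linarith [(hKx 0).2, (hKx 1).2]
    rw [hα00, hα11] at h
    have : ‖y 1 - y 0‖ ≤ (1 - 2/3) * (2*K) + (1 - 2/3) * (2*K) := by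
      have := mul_le_mul_of_nonneg_left hx01 (by norm_num : (0:ℝ) ≤ 1 - 2/3)
      linarith
    push_cast
    norm_num at this ⊢
    linarith
  | succ n ih =>
    rw [norm_sub_rev]
    have h := hstep (n+1)
    have hxd : ‖x (n+2) - x (n+1)‖ ≤ 4 * K / ((n:ℝ) + 3) := by
      calc ‖x (n+2) - x (n+1)‖ ≤ ‖y (n+1) - y n‖ := hxdiff n
        _ = ‖y n - y (n+1)‖ := norm_sub_rev _ _
        _ ≤ 4 * K / ((n:ℝ) + 3) := ih
    have hαn1 : α (n+1) = 2 / ((n:ℝ) + 3) := by simp only [hα]; push_cast; ring_nf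
    have hαn2 : α (n+2) = 2 / ((n:ℝ) + 4) := by simp only [hα]; push_cast; ring_nf
    rw [hαn1, hαn2] at h
    have hd3 : (0:ℝ) < (n:ℝ) + 3 := by positivity
    have hd4 : (0:ℝ) < (n:ℝ) + 4 := by positivity
    have hcoef : (0:ℝ) ≤ 1 - 2/((n:ℝ)+4) := by
      rw [sub_nonneg, div_le_one hd4]; linarith
    have h1 : (1 - 2/((n:ℝ)+4)) * ‖x (n+2) - x (n+1)‖
        ≤ (1 - 2/((n:ℝ)+4)) * (4 * K / ((n:ℝ) + 3)) :=
      mul_le_mul_of_nonneg_left hxd hcoef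
    have heq : (1 - 2/((n:ℝ)+4)) * (4 * K / ((n:ℝ) + 3))
        + (2/((n:ℝ)+3) - 2/((n:ℝ)+4)) * (2*K) = 4 * K / ((n:ℝ) + 4) := by
      field_simp
      ring
    have hgoal : ‖y (n+2) - y (n+1)‖ ≤ 4 * K / ((n:ℝ) + 4) := by
      rw [← heq]; linarith
    push_cast
    convert hgoal using 2
    · push_cast; ring
end

section
/- Let X be a uniformly convex Banach space with modulus of convexity δ : (0,2] → (0,1] (i.e., for all r > 0, ε ∈ (0,2], and x, y, a with ‖x-a‖ ≤ r, ‖y-a‖ ≤ r, ‖x-y‖ ≥ εr, one has ‖(x+y)/2 - a‖ ≤ (1-δ(ε))r). Then for all such r, ε, x, y, a and all λ ∈ [0,1]: ‖(1-λ)x + λy - a‖ ≤ (1 - 2λ(1-λ)δ(ε))·r. -/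
theorem uniform_convexity_convex_combination {X : Type*} [NormedAddCommGroup X]
    [NormedSpace ℝ X] [CompleteSpace X]
    (δ : ℝ → ℝ) (hδrange : ∀ ε ∈ Set.Ioc (0:ℝ) 2, δ ε ∈ Set.Ioc (0:ℝ) 1)
    (huc : ∀ r : ℝ, 0 < r → ∀ ε ∈ Set.Ioc (0:ℝ) 2, ∀ x y a : X,
      ‖x - a‖ ≤ r → ‖y - a‖ ≤ r → ε * r ≤ ‖x - y‖ →
      ‖(1/2 : ℝ) • x + (1/2 : ℝ) • y - a‖ ≤ (1 - δ ε) * r) :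
    ∀ r : ℝ, 0 < r → ∀ ε ∈ Set.Ioc (0:ℝ) 2, ∀ x y a : X,
      ‖x - a‖ ≤ r → ‖y - a‖ ≤ r → ε * r ≤ ‖x - y‖ →
      ∀ lam ∈ Set.Icc (0:ℝ) 1,
        ‖(1 - lam) • x + lam • y - a‖ ≤ (1 - 2 * lam * (1 - lam) * δ ε) * r := by
  intro r hr ε hε x y a hx hy hxy lam hlam
  obtain ⟨hl0, hl1⟩ := hlam
  obtain ⟨hδ0, hδ1⟩ := hδrange ε hε
  have hm := huc r hr ε hε x y a hx hy hxy
  set m : X := (1/2 : ℝ) • x + (1/2 : ℝ) • y with hmdef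
  rcases le_total lam (1/2) with h | h
  · have hrepr : (1 - lam) • x + lam • y - a
        = (1 - 2*lam) • (x - a) + (2*lam) • (m - a) := by
      simp only [hmdef, smul_sub, smul_add, smul_smul]
      module
    rw [hrepr]
    calc ‖(1 - 2*lam) • (x - a) + (2*lam) • (m - a)‖
        ≤ ‖(1 - 2*lam) • (x - a)‖ + ‖(2*lam) • (m - a)‖ := norm_add_le _ _
      _ = (1 - 2*lam) * ‖x - a‖ + (2*lam) * ‖m - a‖ := by
          rw [norm_smul, norm_smul, Real.norm_eq_abs, Real.norm_eq_abs,
            abs_of_nonneg (by linarith), abs_of_nonneg (by linarith)]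
      _ ≤ (1 - 2*lam) * r + (2*lam) * ((1 - δ ε) * r) := by
          gcongr <;> linarith
      _ ≤ (1 - 2 * lam * (1 - lam) * δ ε) * r := by nlinarith [mul_nonneg (mul_nonneg (mul_nonneg hl0 hl0) hδ0.le) hr.le]
  · have hrepr : (1 - lam) • x + lam • y - a
        = (2*lam - 1) • (y - a) + (2*(1-lam)) • (m - a) := by
      simp only [hmdef, smul_sub, smul_add, smul_smul]
      module
    rw [hrepr]
    calc ‖(2*lam - 1) • (y - a) + (2*(1-lam)) • (m - a)‖
        ≤ ‖(2*lam - 1) • (y - a)‖ + ‖(2*(1-lam)) • (m - a)‖ := norm_add_le _ _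
      _ = (2*lam - 1) * ‖y - a‖ + (2*(1-lam)) * ‖m - a‖ := by
          rw [norm_smul, norm_smul, Real.norm_eq_abs, Real.norm_eq_abs,
            abs_of_nonneg (by linarith), abs_of_nonneg (by linarith)]
      _ ≤ (2*lam - 1) * r + (2*(1-lam)) * ((1 - δ ε) * r) := by
          gcongr <;> linarith
      _ ≤ (1 - 2 * lam * (1 - lam) * δ ε) * r := by nlinarith [mul_nonneg (mul_nonneg (mul_nonneg (by linarith : (0:ℝ) ≤ 1 - lam) (by linarith : (0:ℝ) ≤ 1 - lam)) hδ0.le) hr.le]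
end

section
/- Let X be a uniformly convex Banach space with modulus δ : (0,2] → (0,1] as above, C ⊆ X convex, T, U : C → C nonexpansive with common fixed point p, u, x₀ ∈ C, K > 0 with K ≥ max{‖x₀-p‖, ‖u-p‖}. Let (α_n) ⊆ [0,1] with α_n → 0, and (β_n) ⊆ [1/Λ, 1 - 1/Λ] for some integer Λ ≥ 2. Define y_n = (1-α_n) T x_n + α_n u, x_{n+1} = (1-β_n) U y_n + β_n y_n. If ‖x_{n+1} - x_n‖ → 0, then ‖U y_n - y_n‖ → 0. -/
private lemma uc_combo' {X : Type*} [NormedAddCommGroup X] [NormedSpace ℝ X]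
    (w v a : X) (r d l β : ℝ) (hr : 0 ≤ r) (hd0 : 0 ≤ d)
    (hl : 0 < l) (hβl : l ≤ β) (hβu : β ≤ 1 - l)
    (hw : ‖w - a‖ ≤ r) (hv : ‖v - a‖ ≤ r)
    (hm : ‖(1/2:ℝ) • w + (1/2:ℝ) • v - a‖ ≤ (1 - d) * r) :
    ‖(1 - β) • w + β • v - a‖ ≤ (1 - 2 * l * d) * r := by
  have hlh : l ≤ 1/2 := by linarith
  rcases le_total β (1/2) with hb | hb
  · have key : (1-β)•w + β•v - a
        = (1-2*β)•(w-a) + (2*β)•((1/2:ℝ)•w + (1/2:ℝ)•v - a) := by module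
    have h1 : ‖(1-2*β)•(w-a)‖ = (1-2*β)*‖w-a‖ := by
      rw [norm_smul, Real.norm_eq_abs, abs_of_nonneg (by linarith)]
    have h2 : ‖(2*β)•((1/2:ℝ)•w + (1/2:ℝ)•v - a)‖
        = (2*β)*‖(1/2:ℝ)•w + (1/2:ℝ)•v - a‖ := by
      rw [norm_smul, Real.norm_eq_abs, abs_of_nonneg (by linarith)]
    calc ‖(1-β)•w + β•v - a‖
        ≤ ‖(1-2*β)•(w-a)‖ + ‖(2*β)•((1/2:ℝ)•w + (1/2:ℝ)•v - a)‖ := by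
          rw [key]; exact norm_add_le _ _
      _ ≤ (1 - 2*l*d) * r := by
          rw [h1, h2]
          nlinarith [norm_nonneg (w - a), norm_nonneg ((1/2:ℝ)•w + (1/2:ℝ)•v - a),
            mul_le_mul_of_nonneg_left hw (by linarith : (0:ℝ) ≤ 1-2*β),
            mul_le_mul_of_nonneg_left hm (by linarith : (0:ℝ) ≤ 2*β),
            mul_le_mul_of_nonneg_right (mul_le_mul_of_nonneg_left hβl hd0) hr]
  · have key : (1-β)•w + β•v - a
        = (2*β-1)•(v-a) + (2*(1-β))•((1/2:ℝ)•w + (1/2:ℝ)•v - a) := by module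
    have h1 : ‖(2*β-1)•(v-a)‖ = (2*β-1)*‖v-a‖ := by
      rw [norm_smul, Real.norm_eq_abs, abs_of_nonneg (by linarith)]
    have h2 : ‖(2*(1-β))•((1/2:ℝ)•w + (1/2:ℝ)•v - a)‖
        = (2*(1-β))*‖(1/2:ℝ)•w + (1/2:ℝ)•v - a‖ := by
      rw [norm_smul, Real.norm_eq_abs, abs_of_nonneg (by linarith)]
    calc ‖(1-β)•w + β•v - a‖
        ≤ ‖(2*β-1)•(v-a)‖ + ‖(2*(1-β))•((1/2:ℝ)•w + (1/2:ℝ)•v - a)‖ := by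
          rw [key]; exact norm_add_le _ _
      _ ≤ (1 - 2*l*d) * r := by
          rw [h1, h2]
          nlinarith [norm_nonneg (v - a), norm_nonneg ((1/2:ℝ)•w + (1/2:ℝ)•v - a),
            mul_le_mul_of_nonneg_left hv (by linarith : (0:ℝ) ≤ 2*β-1),
            mul_le_mul_of_nonneg_left hm (by linarith : (0:ℝ) ≤ 2*(1-β)),
            mul_le_mul_of_nonneg_right (mul_le_mul_of_nonneg_left (by linarith : l ≤ 1-β) hd0) hr]

private lemma convex_norm_bound' {X : Type*} [NormedAddCommGroup X] [NormedSpace ℝ X]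
    (a : ℝ) (ha0 : 0 ≤ a) (ha1 : a ≤ 1) (v w p : X) :
    ‖(1-a)•v + a•w - p‖ ≤ (1-a)*‖v-p‖ + a*‖w-p‖ := by
  have key : (1-a)•v + a•w - p = (1-a)•(v-p) + a•(w-p) := by module
  rw [key]
  calc ‖(1-a)•(v-p) + a•(w-p)‖ ≤ ‖(1-a)•(v-p)‖ + ‖a•(w-p)‖ := norm_add_le _ _
    _ = (1-a)*‖v-p‖ + a*‖w-p‖ := by
        rw [norm_smul, norm_smul, Real.norm_eq_abs, Real.norm_eq_abs,
          abs_of_nonneg (by linarith), abs_of_nonneg ha0]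

set_option maxHeartbeats 1000000 in
theorem ahm_U_asymptotic_regularity_qualitative {X : Type*} [NormedAddCommGroup X]
    [NormedSpace ℝ X] [CompleteSpace X]
    (δ : ℝ → ℝ) (hδrange : ∀ ε ∈ Set.Ioc (0:ℝ) 2, δ ε ∈ Set.Ioc (0:ℝ) 1)
    (huc : ∀ r : ℝ, 0 < r → ∀ ε ∈ Set.Ioc (0:ℝ) 2, ∀ x y a : X,
      ‖x - a‖ ≤ r → ‖y - a‖ ≤ r → ε * r ≤ ‖x - y‖ →
      ‖(1/2 : ℝ) • x + (1/2 : ℝ) • y - a‖ ≤ (1 - δ ε) * r)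
    (C : Set X) (hC : Convex ℝ C) (T U : X → X)
    (hTC : Set.MapsTo T C C) (hUC : Set.MapsTo U C C)
    (hT : ∀ a ∈ C, ∀ b ∈ C, ‖T a - T b‖ ≤ ‖a - b‖)
    (hU : ∀ a ∈ C, ∀ b ∈ C, ‖U a - U b‖ ≤ ‖a - b‖)
    (u : X) (hu : u ∈ C) (p : X) (hp : p ∈ C) (hTp : T p = p) (hUp : U p = p)
    (K : ℝ) (hK0 : 0 < K)
    (α β : ℕ → ℝ) (hα : ∀ n, α n ∈ Set.Icc (0:ℝ) 1)
    (hα0 : Filter.Tendsto α Filter.atTop (nhds 0))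
    (Λ : ℕ) (hΛ : 2 ≤ Λ)
    (hβ : ∀ n, β n ∈ Set.Icc (1 / (Λ:ℝ)) (1 - 1 / (Λ:ℝ)))
    (x y : ℕ → X) (hx0 : x 0 ∈ C)
    (hK : max ‖x 0 - p‖ ‖u - p‖ ≤ K)
    (hy : ∀ n, y n = (1 - α n) • T (x n) + α n • u)
    (hx : ∀ n, x (n + 1) = (1 - β n) • U (y n) + β n • y n)
    (hxreg : Filter.Tendsto (fun n => ‖x (n + 1) - x n‖) Filter.atTop (nhds 0)) :
    Filter.Tendsto (fun n => ‖U (y n) - y n‖) Filter.atTop (nhds 0) := by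
  have hΛ2 : (2:ℝ) ≤ (Λ:ℝ) := by exact_mod_cast hΛ
  have hl : (0:ℝ) < 1 / (Λ:ℝ) := by positivity
  have hlh : (1:ℝ) / (Λ:ℝ) ≤ 1/2 := by
    rw [div_le_div_iff₀ (by linarith) (by norm_num)]; linarith
  have huK : ‖u - p‖ ≤ K := le_trans (le_max_right _ _) hK
  -- basic invariants
  have key : ∀ n, x n ∈ C ∧ ‖x n - p‖ ≤ K := by
    intro n
    induction n with
    | zero => exact ⟨hx0, le_trans (le_max_left _ _) hK⟩
    | succ n ih =>
      obtain ⟨hxC, hxK⟩ := ih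
      have hαn := hα n
      have hyC : y n ∈ C := by
        rw [hy n]
        exact hC (hTC hxC) hu (by linarith [hαn.2]) hαn.1 (by ring)
      have hTxK : ‖T (x n) - p‖ ≤ K := by
        have := hT (x n) hxC p hp
        rw [hTp] at this
        exact this.trans hxK
      have hyK : ‖y n - p‖ ≤ K := by
        rw [hy n]
        calc ‖(1 - α n) • T (x n) + α n • u - p‖
            ≤ (1 - α n) * ‖T (x n) - p‖ + α n * ‖u - p‖ :=
              convex_norm_bound' (α n) hαn.1 hαn.2 _ _ _
          _ ≤ K := by nlinarith [hαn.1, hαn.2]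
      have hUyK : ‖U (y n) - p‖ ≤ K := by
        have := hU (y n) hyC p hp
        rw [hUp] at this
        exact this.trans hyK
      have hβn := hβ n
      have hβ0 : 0 ≤ β n := le_trans hl.le hβn.1
      have hβ1 : β n ≤ 1 := by linarith [hβn.2]
      refine ⟨?_, ?_⟩
      · rw [hx n]
        exact hC (hUC hyC) hyC (by linarith) hβ0 (by ring)
      · rw [hx n]
        calc ‖(1 - β n) • U (y n) + β n • y n - p‖
            ≤ (1 - β n) * ‖U (y n) - p‖ + β n * ‖y n - p‖ :=
              convex_norm_bound' (β n) hβ0 hβ1 _ _ _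
          _ ≤ K := by nlinarith
  rw [NormedAddCommGroup.tendsto_nhds_zero]
  intro ε hε
  obtain ⟨ε₀, hε₀def⟩ : ∃ e : ℝ, e = min ε (2*K) := ⟨_, rfl⟩
  have hε₀pos : 0 < ε₀ := hε₀def ▸ lt_min hε (by linarith)
  have hε₀2K : ε₀ ≤ 2*K := hε₀def ▸ min_le_right _ _
  have hε₀ε : ε₀ ≤ ε := hε₀def ▸ min_le_left _ _
  have hε' : ε₀ / K ∈ Set.Ioc (0:ℝ) 2 := by
    constructor
    · positivity
    · rw [div_le_iff₀ hK0]; linarith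
  obtain ⟨d, hddef⟩ : ∃ e : ℝ, e = δ (ε₀ / K) := ⟨_, rfl⟩
  obtain ⟨hd0, hd1⟩ : 0 < d ∧ d ≤ 1 := hddef ▸ hδrange _ hε'
  have hthresh : 0 < d * ε₀ / (2 * (Λ:ℝ)) := by positivity
  have hthresh2 : 0 < d * ε₀ / (2 * K * (Λ:ℝ)) := by positivity
  filter_upwards [hα0.eventually (eventually_lt_nhds hthresh2),
    hxreg.eventually (eventually_lt_nhds hthresh)] with n hαn' hxn'
  rw [Real.norm_eq_abs, abs_of_nonneg (norm_nonneg _)]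
  by_contra hcon
  push_neg at hcon
  have hUy : ε₀ ≤ ‖U (y n) - y n‖ := le_trans hε₀ε hcon
  obtain ⟨hxC, hxK⟩ := key n
  have hαn := hα n
  have hyC : y n ∈ C := by
    rw [hy n]
    exact hC (hTC hxC) hu (by linarith [hαn.2]) hαn.1 (by ring)
  have hTxK : ‖T (x n) - p‖ ≤ ‖x n - p‖ := by
    have := hT (x n) hxC p hp
    rwa [hTp] at this
  have hyb : ‖y n - p‖ ≤ ‖x n - p‖ + K * α n := by
    rw [hy n]
    calc ‖(1 - α n) • T (x n) + α n • u - p‖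
        ≤ (1 - α n) * ‖T (x n) - p‖ + α n * ‖u - p‖ :=
          convex_norm_bound' (α n) hαn.1 hαn.2 _ _ _
      _ ≤ ‖x n - p‖ + K * α n := by
          nlinarith [norm_nonneg (x n - p), hαn.1, hαn.2,
            mul_le_mul_of_nonneg_left hTxK (by linarith [hαn.2] : (0:ℝ) ≤ 1 - α n),
            mul_le_mul_of_nonneg_left huK hαn.1]
  have hTxK' : ‖T (x n) - p‖ ≤ K := hTxK.trans hxK
  have hyK : ‖y n - p‖ ≤ K := by
    rw [hy n]
    calc ‖(1 - α n) • T (x n) + α n • u - p‖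
        ≤ (1 - α n) * ‖T (x n) - p‖ + α n * ‖u - p‖ :=
          convex_norm_bound' (α n) hαn.1 hαn.2 _ _ _
      _ ≤ K := by nlinarith [hαn.1, hαn.2]
  have hUyb : ‖U (y n) - p‖ ≤ ‖y n - p‖ := by
    have := hU (y n) hyC p hp
    rwa [hUp] at this
  have hylb : ε₀ / 2 ≤ ‖y n - p‖ := by
    have h2 : ‖U (y n) - y n‖ ≤ ‖U (y n) - p‖ + ‖p - y n‖ :=
      norm_sub_le_norm_sub_add_norm_sub _ _ _
    rw [norm_sub_rev p] at h2
    linarith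
  obtain ⟨r, hrdef⟩ : ∃ e : ℝ, e = ‖y n - p‖ := ⟨_, rfl⟩
  rw [← hrdef] at hyb hyK hUyb hylb
  have hrpos : 0 < r := lt_of_lt_of_le (by linarith) hylb
  have hεr : (ε₀ / K) * r ≤ ‖U (y n) - y n‖ := by
    calc (ε₀ / K) * r ≤ (ε₀ / K) * K := by
          apply mul_le_mul_of_nonneg_left hyK (le_of_lt (by positivity))
      _ = ε₀ := by field_simp
      _ ≤ ‖U (y n) - y n‖ := hUy
  have hm : ‖(1/2:ℝ) • U (y n) + (1/2:ℝ) • y n - p‖ ≤ (1 - d) * r := by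
    rw [hddef]
    exact huc r hrpos _ hε' (U (y n)) (y n) p hUyb hrdef.ge hεr
  have hβn := hβ n
  have hdrop : ‖x (n+1) - p‖ ≤ (1 - 2 * (1/(Λ:ℝ)) * d) * r := by
    rw [hx n]
    exact uc_combo' (U (y n)) (y n) p r d (1/(Λ:ℝ)) (β n) hrpos.le hd0.le hl hβn.1 hβn.2
      hUyb hrdef.ge hm
  have htri : ‖x n - p‖ - ‖x (n+1) - p‖ ≤ ‖x (n+1) - x n‖ := by
    have h := norm_sub_le_norm_sub_add_norm_sub (x n) (x (n+1)) p
    rw [norm_sub_rev (x n) (x (n+1))] at h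
    linarith
  have hKα : K * α n < d * ε₀ / (2 * (Λ:ℝ)) := by
    have := (mul_lt_mul_of_pos_left hαn' hK0)
    calc K * α n < K * (d * ε₀ / (2 * K * (Λ:ℝ))) := this
      _ = d * ε₀ / (2 * (Λ:ℝ)) := by field_simp
  have hfrac : 2 * (1/(Λ:ℝ)) * d * r ≥ d * ε₀ / (Λ:ℝ) := by
    rw [ge_iff_le, div_le_iff₀ (by linarith : (0:ℝ) < (Λ:ℝ))]
    have hstep : d * ε₀ ≤ d * (2 * r) :=
      mul_le_mul_of_nonneg_left (by linarith : ε₀ ≤ 2*r) hd0.le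
    calc d * ε₀ ≤ d * (2*r) := hstep
      _ = 2 * (1/(Λ:ℝ)) * d * r * (Λ:ℝ) := by field_simp
  -- derive contradiction
  have hdrop' : ‖x (n+1) - p‖ ≤ r - 2 * (1/(Λ:ℝ)) * d * r := by
    have hexp : (1 - 2 * (1/(Λ:ℝ)) * d) * r = r - 2 * (1/(Λ:ℝ)) * d * r := by ring
    linarith [hdrop, hexp.ge]
  have h2 : d * ε₀ / (Λ:ℝ) = 2 * (d * ε₀ / (2 * (Λ:ℝ))) := by
    field_simp
  linarith [htri, hxn', hKα, hfrac, hdrop', hyb]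
end

section
/- Let X be a uniformly convex Banach space with monotone modulus η : (0,∞)×(0,2] → (0,1] (η(s,ε) ≤ η(r,ε) when r ≤ s, and for all x,y,a with ‖x-a‖,‖y-a‖ ≤ r and ‖x-y‖ ≥ εr: ‖(x+y)/2 - a‖ ≤ (1-η(r,ε))r). Let C ⊆ X be convex, T, U : C → C nonexpansive with T p = U p = p, u, x₀ ∈ C, K a positive integer with K ≥ max{‖x₀-p‖, ‖u-p‖}. Let (α_n) ⊆ [0,1] with rate of convergence σ₁ to 0 (∀k ∀n ≥ σ₁(k): α_n ≤ 1/(k+1)), Λ ≥ 2 an integer with 1/Λ ≤ β_n ≤ 1 - 1/Λ for all n, and Δ : ℕ → ℕ a rate of asymptotic regularity of (x_n) (∀k ∀n ≥ Δ(k): ‖x_{n+1} - x_n‖ ≤ 1/(k+1)), where y_n = (1-α_n) T x_n + α_n u, x_{n+1} = (1-β_n) U y_n + β_n y_n. Then for every k ∈ ℕ and every n ≥ max{Δ(2P(k+1)-1), σ₁(2PK(k+1)-1)}, where P = ⌈Λ²/η(K, 1/(K(k+1)))⌉, one has ‖U y_n - y_n‖ ≤ 1/(k+1). -/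
set_option maxHeartbeats 1000000

private lemma comb_norm_le {X : Type*} [NormedAddCommGroup X] [NormedSpace ℝ X]
    (a b : ℝ) (v w : X) (ha : 0 ≤ a) (hb : 0 ≤ b) :
    ‖a • v + b • w‖ ≤ a * ‖v‖ + b * ‖w‖ := by
  calc ‖a • v + b • w‖ ≤ ‖a • v‖ + ‖b • w‖ := norm_add_le _ _
    _ = a * ‖v‖ + b * ‖w‖ := by
        rw [norm_smul, norm_smul, Real.norm_of_nonneg ha, Real.norm_of_nonneg hb]
theorem ahm_U_asymptotic_regularity_rate {X : Type*} [NormedAddCommGroup X]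
    [NormedSpace ℝ X] [CompleteSpace X]
    (η : ℝ → ℝ → ℝ)
    (hηrange : ∀ r : ℝ, 0 < r → ∀ ε ∈ Set.Ioc (0:ℝ) 2, η r ε ∈ Set.Ioc (0:ℝ) 1)
    (hηmono : ∀ r s : ℝ, 0 < r → r ≤ s → ∀ ε ∈ Set.Ioc (0:ℝ) 2, η s ε ≤ η r ε)
    (huc : ∀ r : ℝ, 0 < r → ∀ ε ∈ Set.Ioc (0:ℝ) 2, ∀ x y a : X,
      ‖x - a‖ ≤ r → ‖y - a‖ ≤ r → ε * r ≤ ‖x - y‖ →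
      ‖(1/2 : ℝ) • x + (1/2 : ℝ) • y - a‖ ≤ (1 - η r ε) * r)
    (C : Set X) (hC : Convex ℝ C) (T U : X → X)
    (hTC : Set.MapsTo T C C) (hUC : Set.MapsTo U C C)
    (hT : ∀ a ∈ C, ∀ b ∈ C, ‖T a - T b‖ ≤ ‖a - b‖)
    (hU : ∀ a ∈ C, ∀ b ∈ C, ‖U a - U b‖ ≤ ‖a - b‖)
    (u : X) (hu : u ∈ C) (p : X) (hp : p ∈ C) (hTp : T p = p) (hUp : U p = p)
    (K : ℕ) (hK0 : 1 ≤ K)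
    (α β : ℕ → ℝ) (hα : ∀ n, α n ∈ Set.Icc (0:ℝ) 1)
    (σ₁ : ℕ → ℕ) (hσ₁ : ∀ k n : ℕ, σ₁ k ≤ n → α n ≤ 1 / (k + 1))
    (Λ : ℕ) (hΛ : 2 ≤ Λ)
    (hβ : ∀ n, β n ∈ Set.Icc (1 / (Λ:ℝ)) (1 - 1 / (Λ:ℝ)))
    (x y : ℕ → X) (hx0 : x 0 ∈ C)
    (hK : max ‖x 0 - p‖ ‖u - p‖ ≤ (K : ℝ))
    (hy : ∀ n, y n = (1 - α n) • T (x n) + α n • u)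
    (hx : ∀ n, x (n + 1) = (1 - β n) • U (y n) + β n • y n)
    (Δ : ℕ → ℕ) (hΔ : ∀ k n : ℕ, Δ k ≤ n → ‖x (n + 1) - x n‖ ≤ 1 / (k + 1)) :
    ∀ k : ℕ, ∀ P : ℕ, P = ⌈(Λ : ℝ) ^ 2 / η (K : ℝ) (1 / ((K : ℝ) * (k + 1)))⌉₊ →
      ∀ n : ℕ, max (Δ (2 * P * (k + 1) - 1)) (σ₁ (2 * P * K * (k + 1) - 1)) ≤ n →
        ‖U (y n) - y n‖ ≤ 1 / (k + 1) := by
  intro k P hP n hn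
  have hKR : (1:ℝ) ≤ K := by exact_mod_cast hK0
  have hKpos : (0:ℝ) < K := by linarith
  have hk1 : (0:ℝ) < (k:ℝ) + 1 := by positivity
  have hΛR : (2:ℝ) ≤ Λ := by exact_mod_cast hΛ
  have hΛpos : (0:ℝ) < Λ := by linarith
  set ε : ℝ := 1 / ((K:ℝ) * ((k:ℝ) + 1)) with hεdef
  have hεpos : 0 < ε := by positivity
  have hεle : ε ≤ 2 := by
    rw [hεdef, div_le_iff₀ (by positivity)]
    have h5 : (1:ℝ)*1 ≤ (K:ℝ)*((k:ℝ)+1) :=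
      mul_le_mul hKR (by linarith) zero_le_one (by linarith)
    linarith only [h5]
  have hεmem : ε ∈ Set.Ioc (0:ℝ) 2 := ⟨hεpos, hεle⟩
  obtain ⟨hη₀pos, hη₀le⟩ := hηrange (K:ℝ) hKpos ε hεmem
  set η₀ : ℝ := η (K:ℝ) ε with hη₀def
  have hPge : (Λ:ℝ)^2 / η₀ ≤ P := by rw [hP]; exact Nat.le_ceil _
  have hPpos : 0 < P := by
    have h1 : (0:ℝ) < (Λ:ℝ)^2/η₀ := by positivity
    have h2 : (0:ℝ) < (P:ℝ) := lt_of_lt_of_le h1 hPge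
    exact_mod_cast h2
  have hPR : (0:ℝ) < P := by exact_mod_cast hPpos
  have hub : ‖u - p‖ ≤ (K:ℝ) := le_trans (le_max_right _ _) hK
  -- one-step facts
  have step : ∀ m, x m ∈ C → (y m ∈ C ∧
      ‖y m - p‖ ≤ (1 - α m) * ‖x m - p‖ + α m * (K:ℝ) ∧
      x (m+1) ∈ C ∧ ‖x (m+1) - p‖ ≤ ‖y m - p‖) := by
    intro m hxm
    obtain ⟨hα0, hα1⟩ := hα m
    obtain ⟨hβl, hβu⟩ := hβ m
    have hβ0 : (0:ℝ) ≤ β m := le_trans (by positivity) hβl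
    have hβ1 : β m ≤ 1 := by
      have h1 : (0:ℝ) < 1/(Λ:ℝ) := by positivity
      linarith
    have hTxm : T (x m) ∈ C := hTC hxm
    have hym : y m ∈ C := by
      rw [hy m]
      exact hC hTxm hu (by linarith) hα0 (by ring)
    have hTb : ‖T (x m) - p‖ ≤ ‖x m - p‖ := by
      have h := hT (x m) hxm p hp; rwa [hTp] at h
    have hyb : ‖y m - p‖ ≤ (1 - α m) * ‖x m - p‖ + α m * (K:ℝ) := by
      have heq : y m - p = (1 - α m) • (T (x m) - p) + (α m) • (u - p) := by
        rw [hy m]; module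
      rw [heq]
      calc ‖(1 - α m) • (T (x m) - p) + (α m) • (u - p)‖
          ≤ (1 - α m) * ‖T (x m) - p‖ + α m * ‖u - p‖ :=
            comb_norm_le _ _ _ _ (by linarith) hα0
        _ ≤ (1 - α m) * ‖x m - p‖ + α m * (K:ℝ) :=
            add_le_add (mul_le_mul_of_nonneg_left hTb (by linarith))
              (mul_le_mul_of_nonneg_left hub hα0)
    have hUym : U (y m) ∈ C := hUC hym
    have hUb : ‖U (y m) - p‖ ≤ ‖y m - p‖ := by
      have h := hU (y m) hym p hp; rwa [hUp] at h
    refine ⟨hym, hyb, ?_, ?_⟩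
    · rw [hx m]; exact hC hUym hym (by linarith) hβ0 (by ring)
    · have heq : x (m+1) - p = (1 - β m) • (U (y m) - p) + (β m) • (y m - p) := by
        rw [hx m]; module
      rw [heq]
      calc ‖(1 - β m) • (U (y m) - p) + (β m) • (y m - p)‖
          ≤ (1 - β m) * ‖U (y m) - p‖ + β m * ‖y m - p‖ :=
            comb_norm_le _ _ _ _ (by linarith) hβ0
        _ ≤ (1 - β m) * ‖y m - p‖ + β m * ‖y m - p‖ :=
            add_le_add (mul_le_mul_of_nonneg_left hUb (by linarith)) le_rfl
        _ = ‖y m - p‖ := by ring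
  have key : ∀ m, x m ∈ C ∧ ‖x m - p‖ ≤ (K:ℝ) := by
    intro m
    induction m with
    | zero => exact ⟨hx0, le_trans (le_max_left _ _) hK⟩
    | succ m ih =>
      obtain ⟨hxm, hxb⟩ := ih
      obtain ⟨hym, hyb, hxm1, hxb1⟩ := step m hxm
      obtain ⟨hα0, hα1⟩ := hα m
      refine ⟨hxm1, ?_⟩
      have h5 : (1 - α m) * ‖x m - p‖ ≤ (1 - α m) * (K:ℝ) :=
        mul_le_mul_of_nonneg_left hxb (by linarith)
      linarith only [hxb1, hyb, h5]
  obtain ⟨hxn, hxnb⟩ := key n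
  obtain ⟨hynC, hynb', hxn1C, hxn1b⟩ := step n hxn
  obtain ⟨hαn0, hαn1⟩ := hα n
  have hynb : ‖y n - p‖ ≤ (K:ℝ) := by
    have h5 : (1 - α n) * ‖x n - p‖ ≤ (1 - α n) * (K:ℝ) :=
      mul_le_mul_of_nonneg_left hxnb (by linarith)
    linarith only [hynb', h5]
  by_contra hcon
  push_neg at hcon
  set r : ℝ := ‖y n - p‖ with hrdef
  have hUyb : ‖U (y n) - p‖ ≤ r := by
    have h := hU (y n) hynC p hp; rwa [hUp] at h
  have htr : ‖U (y n) - y n‖ ≤ ‖U (y n) - p‖ + ‖p - y n‖ :=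
    norm_sub_le_norm_sub_add_norm_sub _ _ _
  have hpy : ‖p - y n‖ = r := by rw [hrdef, norm_sub_rev]
  have h2r : 1/((k:ℝ)+1) < 2 * r := by
    rw [hpy] at htr; linarith
  have hrpos : 0 < r := by
    have hpos : (0:ℝ) < 1/((k:ℝ)+1) := by positivity
    linarith
  have hr : 1/(2*((k:ℝ)+1)) < r := by
    rw [show (2:ℝ)*((k:ℝ)+1) = ((k:ℝ)+1)*2 by ring, ← div_div]
    linarith
  have hεK : ε * (K:ℝ) = 1/((k:ℝ)+1) := by
    rw [hεdef]; field_simp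
  have hεr : ε * r ≤ ‖U (y n) - y n‖ := by
    have h1 : ε * r ≤ ε * K := mul_le_mul_of_nonneg_left hynb hεpos.le
    linarith
  have hmid := huc r hrpos ε hεmem (U (y n)) (y n) p hUyb le_rfl hεr
  obtain ⟨hβl, hβu⟩ := hβ n
  have hΛinv : (0:ℝ) < 1/(Λ:ℝ) := by positivity
  have hηr : η₀ ≤ η r ε := hηmono r (K:ℝ) hrpos hynb ε hεmem
  have hηrpos : 0 < η r ε := (hηrange r hrpos ε hεmem).1
  have h2Λ : 2/(Λ:ℝ) = 2*(1/(Λ:ℝ)) := by ring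
  have hcomb : ‖x (n+1) - p‖ ≤ r - (2/(Λ:ℝ)) * η r ε * r := by
    rw [hx n]
    rcases le_or_gt (β n) (1/2) with hc | hc
    · have heq : (1 - β n) • U (y n) + β n • y n - p
          = (1 - 2*β n) • (U (y n) - p)
            + (2*β n) • (((1/2:ℝ) • U (y n) + (1/2:ℝ) • y n) - p) := by module
      rw [heq]
      have hcalc : ‖(1 - 2*β n) • (U (y n) - p)
            + (2*β n) • (((1/2:ℝ) • U (y n) + (1/2:ℝ) • y n) - p)‖
          ≤ (1 - 2*β n) * r + (2*β n) * ((1 - η r ε) * r) := by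
        calc ‖(1 - 2*β n) • (U (y n) - p)
            + (2*β n) • (((1/2:ℝ) • U (y n) + (1/2:ℝ) • y n) - p)‖
            ≤ (1 - 2*β n) * ‖U (y n) - p‖
              + (2*β n) * ‖((1/2:ℝ) • U (y n) + (1/2:ℝ) • y n) - p‖ :=
              comb_norm_le _ _ _ _ (by linarith) (by linarith)
          _ ≤ (1 - 2*β n) * r + (2*β n) * ((1 - η r ε) * r) :=
              add_le_add (mul_le_mul_of_nonneg_left hUyb (by linarith))
                (mul_le_mul_of_nonneg_left hmid (by linarith))
      have haux : 0 ≤ (β n - 1/(Λ:ℝ)) * (η r ε * r) :=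
        mul_nonneg (by linarith) (mul_nonneg hηrpos.le hrpos.le)
      calc ‖(1 - 2*β n) • (U (y n) - p)
            + (2*β n) • (((1/2:ℝ) • U (y n) + (1/2:ℝ) • y n) - p)‖
          ≤ (1 - 2*β n) * r + (2*β n) * ((1 - η r ε) * r) := hcalc
        _ = r - 2*(1/(Λ:ℝ))*(η r ε * r) - 2*((β n - 1/(Λ:ℝ)) * (η r ε * r)) := by ring
        _ ≤ r - 2*(1/(Λ:ℝ))*(η r ε * r) := by linarith only [haux]
        _ = r - (2/(Λ:ℝ)) * η r ε * r := by ring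
    · have heq : (1 - β n) • U (y n) + β n • y n - p
          = (2 - 2*β n) • (((1/2:ℝ) • U (y n) + (1/2:ℝ) • y n) - p)
            + (2*β n - 1) • (y n - p) := by module
      rw [heq]
      have hcalc : ‖(2 - 2*β n) • (((1/2:ℝ) • U (y n) + (1/2:ℝ) • y n) - p)
            + (2*β n - 1) • (y n - p)‖
          ≤ (2 - 2*β n) * ((1 - η r ε) * r) + (2*β n - 1) * r := by
        calc ‖(2 - 2*β n) • (((1/2:ℝ) • U (y n) + (1/2:ℝ) • y n) - p)
            + (2*β n - 1) • (y n - p)‖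
            ≤ (2 - 2*β n) * ‖((1/2:ℝ) • U (y n) + (1/2:ℝ) • y n) - p‖
              + (2*β n - 1) * ‖y n - p‖ :=
              comb_norm_le _ _ _ _ (by linarith) (by linarith)
          _ ≤ (2 - 2*β n) * ((1 - η r ε) * r) + (2*β n - 1) * r :=
              add_le_add (mul_le_mul_of_nonneg_left hmid (by linarith)) le_rfl
      have haux : 0 ≤ ((1 - β n) - 1/(Λ:ℝ)) * (η r ε * r) :=
        mul_nonneg (by linarith) (mul_nonneg hηrpos.le hrpos.le)
      calc ‖(2 - 2*β n) • (((1/2:ℝ) • U (y n) + (1/2:ℝ) • y n) - p)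
            + (2*β n - 1) • (y n - p)‖
          ≤ (2 - 2*β n) * ((1 - η r ε) * r) + (2*β n - 1) * r := hcalc
        _ = r - 2*(1/(Λ:ℝ))*(η r ε * r) - 2*(((1 - β n) - 1/(Λ:ℝ)) * (η r ε * r)) := by ring
        _ ≤ r - 2*(1/(Λ:ℝ))*(η r ε * r) := by linarith only [haux]
        _ = r - (2/(Λ:ℝ)) * η r ε * r := by ring
  have hstep2 : ‖x (n+1) - p‖ ≤ r - (2/(Λ:ℝ)) * η₀ * r := by
    have haux : 0 ≤ (2/(Λ:ℝ) * r) * (η r ε - η₀) :=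
      mul_nonneg (mul_nonneg (by positivity) hrpos.le) (by linarith)
    linarith only [hcomb, haux, hηr]
  have hPη : (Λ:ℝ) ≤ η₀ * P := by
    have h1 : η₀ * ((Λ:ℝ)^2/η₀) ≤ η₀ * P := mul_le_mul_of_nonneg_left hPge hη₀pos.le
    have h2 : η₀ * ((Λ:ℝ)^2/η₀) = (Λ:ℝ)^2 := by field_simp
    have h3 : (0:ℝ) ≤ (Λ:ℝ) * ((Λ:ℝ) - 1) := mul_nonneg hΛpos.le (by linarith)
    linarith only [h1, h2, h3]
  have hdrop : 1/((P:ℝ)*((k:ℝ)+1)) < (2/(Λ:ℝ)) * η₀ * r := by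
    have h1 : 1/((P:ℝ)*((k:ℝ)+1)) ≤ η₀/((Λ:ℝ)*((k:ℝ)+1)) := by
      rw [div_le_div_iff₀ (by positivity) (by positivity)]
      have h4 := mul_le_mul_of_nonneg_right hPη hk1.le
      linarith only [h4]
    have h2 : η₀/((Λ:ℝ)*((k:ℝ)+1)) = (2/(Λ:ℝ)) * η₀ * (1/(2*((k:ℝ)+1))) := by
      field_simp
    have h3 : (2/(Λ:ℝ)) * η₀ * (1/(2*((k:ℝ)+1))) < (2/(Λ:ℝ)) * η₀ * r := by
      have hpos : (0:ℝ) < (2/(Λ:ℝ)) * η₀ := by positivity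
      exact mul_lt_mul_of_pos_left hr hpos
    linarith only [h1, h2, h3]
  have hfinal1 : ‖x (n+1) - p‖ < r - 1/((P:ℝ)*((k:ℝ)+1)) := by
    linarith only [hstep2, hdrop]
  -- rates
  have hc1 : ((2*P*(k+1) - 1 : ℕ) : ℝ) + 1 = 2*(P:ℝ)*((k:ℝ)+1) := by
    have hpos : 0 < 2*P*(k+1) := by positivity
    have h2 : (2*P*(k+1) - 1) + 1 = 2*P*(k+1) := Nat.succ_pred_eq_of_pos hpos
    have h3 := congrArg (Nat.cast : ℕ → ℝ) h2
    push_cast at h3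
    linarith
  have hΔn := hΔ (2*P*(k+1)-1) n (le_trans (le_max_left _ _) hn)
  rw [hc1] at hΔn
  have hc2 : ((2*P*K*(k+1) - 1 : ℕ) : ℝ) + 1 = 2*(P:ℝ)*(K:ℝ)*((k:ℝ)+1) := by
    have hpos : 0 < 2*P*K*(k+1) := by positivity
    have h2 : (2*P*K*(k+1) - 1) + 1 = 2*P*K*(k+1) := Nat.succ_pred_eq_of_pos hpos
    have h3 := congrArg (Nat.cast : ℕ → ℝ) h2
    push_cast at h3
    linarith
  have hσn := hσ₁ (2*P*K*(k+1)-1) n (le_trans (le_max_right _ _) hn)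
  rw [hc2] at hσn
  have hαK : α n * (K:ℝ) ≤ 1/(2*(P:ℝ)*((k:ℝ)+1)) := by
    have h1 : α n * (K:ℝ) ≤ (1/(2*(P:ℝ)*(K:ℝ)*((k:ℝ)+1))) * (K:ℝ) :=
      mul_le_mul_of_nonneg_right hσn (by positivity)
    have h2 : (1/(2*(P:ℝ)*(K:ℝ)*((k:ℝ)+1))) * (K:ℝ) = 1/(2*(P:ℝ)*((k:ℝ)+1)) := by
      field_simp
    linarith
  have htri : ‖x n - p‖ ≤ ‖x (n+1) - x n‖ + ‖x (n+1) - p‖ := by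
    have h := norm_sub_le_norm_sub_add_norm_sub (x n) (x (n+1)) p
    have h2 : ‖x n - x (n+1)‖ = ‖x (n+1) - x n‖ := norm_sub_rev _ _
    linarith only [h, h2]
  have hyx : r ≤ ‖x n - p‖ + α n * (K:ℝ) := by
    have h5 : (1 - α n) * ‖x n - p‖ ≤ ‖x n - p‖ :=
      mul_le_of_le_one_left (norm_nonneg _) (by linarith)
    linarith only [hynb', h5]
  have hsum : (1:ℝ)/(2*(P:ℝ)*((k:ℝ)+1)) + 1/(2*(P:ℝ)*((k:ℝ)+1)) = 1/((P:ℝ)*((k:ℝ)+1)) := by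
    field_simp
    ring
  have hchk : ‖x (n+1) - x n‖ ≤ 1/(2*(P:ℝ)*((k:ℝ)+1)) := hΔn
  clear_value r
  have s1 : r ≤ ‖x (n+1) - x n‖ + ‖x (n+1) - p‖ + α n * (K:ℝ) := by
    linarith only [hyx, htri]
  have s2 : r ≤ ‖x (n+1) - p‖ + 1/(2*(P:ℝ)*((k:ℝ)+1)) + 1/(2*(P:ℝ)*((k:ℝ)+1)) := by
    linarith only [s1, hchk, hαK]
  have s3 : r ≤ ‖x (n+1) - p‖ + 1/((P:ℝ)*((k:ℝ)+1)) := by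
    linarith only [s2, hsum]
  have s4 : ‖x (n+1) - p‖ + 1/((P:ℝ)*((k:ℝ)+1)) < r := by
    linarith only [hfinal1]
  exact absurd (lt_of_le_of_lt s3 s4) (lt_irrefl r)
end

section
/- Let X be a CAT(0) space (or a Hilbert space), C convex, T, U : C → C nonexpansive with common fixed point p, u, x₀ ∈ C, α_n = 2/(n+2), β_n = β ∈ (0,1), K a positive integer with K ≥ max{d(x₀,p), d(u,p)}, and Λ = ⌈max{1/β, 1/(1-β)}⌉. Define the alternating Halpern-Mann iteration y_n = (1-α_n) T x_n ⊕ α_n u, x_{n+1} = (1-β) U y_n ⊕ β y_n. Then for all k ∈ ℕ and all n ≥ 2⁶K²Λ²(k+1)² - 2: d(U y_n, y_n) ≤ 1/(k+1). -/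
set_option maxHeartbeats 1000000

open scoped RealInnerProductSpace

private lemma combo_norm_sq {X : Type*} [NormedAddCommGroup X] [InnerProductSpace ℝ X]
    (t : ℝ) (a b : X) :
    ‖(1 - t) • a + t • b‖ ^ 2
      = (1 - t) * ‖a‖ ^ 2 + t * ‖b‖ ^ 2 - t * (1 - t) * ‖a - b‖ ^ 2 := by
  have h1 := norm_add_sq_real ((1 - t) • a) (t • b)
  have h2 := norm_sub_sq_real a b
  rw [real_inner_smul_left, real_inner_smul_right, norm_smul, norm_smul,
    Real.norm_eq_abs, Real.norm_eq_abs, mul_pow, mul_pow, sq_abs, sq_abs] at h1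
  linear_combination h1 + t * (1 - t) * h2

private lemma combo_norm_le {X : Type*} [NormedAddCommGroup X] [NormedSpace ℝ X]
    (t : ℝ) (h0 : 0 ≤ t) (h1 : t ≤ 1) (a b : X) :
    ‖(1 - t) • a + t • b‖ ≤ (1 - t) * ‖a‖ + t * ‖b‖ := by
  refine le_trans (norm_add_le _ _) ?_
  rw [norm_smul, norm_smul, Real.norm_eq_abs, Real.norm_eq_abs,
    abs_of_nonneg (by linarith), abs_of_nonneg h0]

private lemma sq_diff_le {s t δ Kr : ℝ} (hs : 0 ≤ s) (ht : 0 ≤ t) (htK : t ≤ Kr)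
    (hδ : 0 ≤ δ) (hδ2 : δ ≤ 2 * Kr) (h : s ≤ t + δ) :
    s ^ 2 - t ^ 2 ≤ 4 * Kr * δ := by
  nlinarith [mul_self_le_mul_self hs h, mul_le_mul_of_nonneg_left htK hδ,
    mul_le_mul_of_nonneg_left hδ2 hδ]

/-- Quadratic rate of U-asymptotic regularity for the alternating Halpern–Mann iteration,
stated in a (real) Hilbert space, a particular case of a CAT(0) space. -/
theorem ahm_quadratic_rate_U {X : Type*} [NormedAddCommGroup X]
    [InnerProductSpace ℝ X] [CompleteSpace X]
    (C : Set X) (hC : Convex ℝ C) (T U : X → X)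
    (hTC : Set.MapsTo T C C) (hUC : Set.MapsTo U C C)
    (hT : ∀ a ∈ C, ∀ b ∈ C, ‖T a - T b‖ ≤ ‖a - b‖)
    (hU : ∀ a ∈ C, ∀ b ∈ C, ‖U a - U b‖ ≤ ‖a - b‖)
    (u : X) (hu : u ∈ C) (p : X) (hp : p ∈ C) (hTp : T p = p) (hUp : U p = p)
    (β : ℝ) (hβ : β ∈ Set.Ioo (0:ℝ) 1)
    (K : ℕ) (hK0 : 1 ≤ K) (Λ : ℕ) (hΛ : Λ = ⌈max (1 / β) (1 / (1 - β))⌉₊)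
    (x y : ℕ → X) (hx0 : x 0 ∈ C)
    (hK : max ‖x 0 - p‖ ‖u - p‖ ≤ (K : ℝ))
    (hy : ∀ n : ℕ, y n = (1 - 2 / ((n : ℝ) + 2)) • T (x n) + (2 / ((n : ℝ) + 2)) • u)
    (hx : ∀ n : ℕ, x (n + 1) = (1 - β) • U (y n) + β • y n) :
    ∀ k n : ℕ, 2 ^ 6 * K ^ 2 * Λ ^ 2 * (k + 1) ^ 2 - 2 ≤ n →
      ‖U (y n) - y n‖ ≤ 1 / (k + 1) := by
  obtain ⟨hβ0, hβ1⟩ := hβ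
  have hβ1' : (0:ℝ) < 1 - β := by linarith
  have hK1 : (1:ℝ) ≤ (K:ℝ) := by exact_mod_cast hK0
  have hKpos : (0:ℝ) < (K:ℝ) := by linarith
  have hKx0 : ‖x 0 - p‖ ≤ (K:ℝ) := le_trans (le_max_left _ _) hK
  have hKu : ‖u - p‖ ≤ (K:ℝ) := le_trans (le_max_right _ _) hK
  have hα0 : ∀ n : ℕ, (0:ℝ) < 2 / ((n:ℝ) + 2) := fun n => by positivity
  have hα1 : ∀ n : ℕ, 2 / ((n:ℝ) + 2) ≤ 1 := fun n => by
    rw [div_le_one (by positivity)]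
    have : (0:ℝ) ≤ (n:ℝ) := Nat.cast_nonneg n
    linarith
  -- invariance and boundedness
  have hmain : ∀ n, x n ∈ C ∧ ‖x n - p‖ ≤ (K:ℝ) := by
    intro n
    induction n with
    | zero => exact ⟨hx0, hKx0⟩
    | succ n ih =>
      obtain ⟨hxC, hxK⟩ := ih
      have hTxC : T (x n) ∈ C := hTC hxC
      have hyC : y n ∈ C := by
        rw [hy n]
        exact hC hTxC hu (by linarith [hα1 n]) (le_of_lt (hα0 n)) (by ring)
      have hTx : ‖T (x n) - p‖ ≤ ‖x n - p‖ := by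
        have := hT (x n) hxC p hp; rwa [hTp] at this
      have hidy : y n - p
          = (1 - 2/((n:ℝ)+2)) • (T (x n) - p) + (2/((n:ℝ)+2)) • (u - p) := by
        rw [hy n]; module
      have hyK : ‖y n - p‖ ≤ (K:ℝ) := by
        have h1 := combo_norm_le (2/((n:ℝ)+2)) (le_of_lt (hα0 n)) (hα1 n)
          (T (x n) - p) (u - p)
        rw [← hidy] at h1
        have h01 : (0:ℝ) ≤ 1 - 2/((n:ℝ)+2) := by linarith [hα1 n]
        have h2 := mul_le_mul_of_nonneg_left hTx h01
        have h3 := mul_le_mul_of_nonneg_left hKu (le_of_lt (hα0 n))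
        nlinarith [norm_nonneg (x n - p)]
      have hUyC : U (y n) ∈ C := hUC hyC
      refine ⟨?_, ?_⟩
      · rw [hx n]
        exact hC hUyC hyC (by linarith) (le_of_lt hβ0) (by ring)
      · have hidx : x (n+1) - p = (1-β) • (U (y n) - p) + β • (y n - p) := by
          rw [hx n]; module
        have hUyK : ‖U (y n) - p‖ ≤ ‖y n - p‖ := by
          have := hU (y n) hyC p hp; rwa [hUp] at this
        have h1 := combo_norm_le β (le_of_lt hβ0) (le_of_lt hβ1)
          (U (y n) - p) (y n - p)
        rw [← hidx] at h1
        nlinarith [norm_nonneg (y n - p)]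
  have hxC : ∀ n, x n ∈ C := fun n => (hmain n).1
  have hxK : ∀ n, ‖x n - p‖ ≤ (K:ℝ) := fun n => (hmain n).2
  have hyC : ∀ n, y n ∈ C := fun n => by
    rw [hy n]
    exact hC (hTC (hxC n)) hu (by linarith [hα1 n]) (le_of_lt (hα0 n)) (by ring)
  have hTx : ∀ n, ‖T (x n) - p‖ ≤ ‖x n - p‖ := fun n => by
    have := hT (x n) (hxC n) p hp; rwa [hTp] at this
  have hUy : ∀ n, ‖U (y n) - p‖ ≤ ‖y n - p‖ := fun n => by
    have := hU (y n) (hyC n) p hp; rwa [hUp] at this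
  have hidy : ∀ n, y n - p
      = (1 - 2/((n:ℝ)+2)) • (T (x n) - p) + (2/((n:ℝ)+2)) • (u - p) := fun n => by
    rw [hy n]; module
  -- ‖y n - p‖ ≤ ‖x n - p‖ + α_n K
  have hyK : ∀ n, ‖y n - p‖ ≤ ‖x n - p‖ + (2/((n:ℝ)+2)) * (K:ℝ) := by
    intro n
    have h1 := combo_norm_le (2/((n:ℝ)+2)) (le_of_lt (hα0 n)) (hα1 n)
      (T (x n) - p) (u - p)
    rw [← hidy n] at h1
    have h01 : (0:ℝ) ≤ 1 - 2/((n:ℝ)+2) := by linarith [hα1 n]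
    have h2 := mul_le_mul_of_nonneg_left (hTx n) h01
    have h3 := mul_le_mul_of_nonneg_left hKu (le_of_lt (hα0 n))
    nlinarith [norm_nonneg (x n - p), hα0 n]
  have hyK' : ∀ n, ‖y n - p‖ ≤ (K:ℝ) := by
    intro n
    have h1 := combo_norm_le (2/((n:ℝ)+2)) (le_of_lt (hα0 n)) (hα1 n)
      (T (x n) - p) (u - p)
    rw [← hidy n] at h1
    have h01 : (0:ℝ) ≤ 1 - 2/((n:ℝ)+2) := by linarith [hα1 n]
    have h2 := mul_le_mul_of_nonneg_left (hTx n) h01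
    have h3 := mul_le_mul_of_nonneg_left hKu (le_of_lt (hα0 n))
    nlinarith [norm_nonneg (x n - p), hxK n, hα0 n]
  have hTu : ∀ n, ‖T (x n) - u‖ ≤ 2 * (K:ℝ) := by
    intro n
    have hid : T (x n) - u = (T (x n) - p) - (u - p) := by abel
    have h1 : ‖T (x n) - u‖ ≤ ‖T (x n) - p‖ + ‖u - p‖ := by
      rw [hid]; exact norm_sub_le _ _
    linarith [hTx n, hxK n, hKu]
  -- linear rate for consecutive differences
  have he : ∀ n, ‖x (n+1) - x n‖ ≤ 4 * (K:ℝ) / ((n:ℝ) + 2) := by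
    intro n
    induction n with
    | zero =>
      have hid : x 1 - x 0 = (x 1 - p) - (x 0 - p) := by abel
      have h1 : ‖x 1 - x 0‖ ≤ ‖x 1 - p‖ + ‖x 0 - p‖ := by
        rw [hid]; exact norm_sub_le _ _
      have h2 := hxK 1
      have h3 := hxK 0
      norm_num
      linarith
    | succ n ih =>
      have hid1 : x (n+2) - x (n+1)
          = (1-β) • (U (y (n+1)) - U (y n)) + β • (y (n+1) - y n) := by
        rw [hx (n+1), hx n]; module
      have hU2 : ‖U (y (n+1)) - U (y n)‖ ≤ ‖y (n+1) - y n‖ :=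
        hU _ (hyC _) _ (hyC _)
      have hstep1 : ‖x (n+2) - x (n+1)‖ ≤ ‖y (n+1) - y n‖ := by
        have h1 := combo_norm_le β (le_of_lt hβ0) (le_of_lt hβ1)
          (U (y (n+1)) - U (y n)) (y (n+1) - y n)
        rw [← hid1] at h1
        nlinarith [norm_nonneg (y (n+1) - y n)]
      have hid2 : y (n+1) - y n
          = (1 - 2/((n:ℝ)+3)) • (T (x (n+1)) - T (x n))
            + (2/((n:ℝ)+2) - 2/((n:ℝ)+3)) • (T (x n) - u) := by
        rw [hy (n+1), hy n]
        push_cast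
        have hc : ((n:ℝ)+1)+2 = (n:ℝ)+3 := by ring
        rw [hc]
        module
      have h3pos : (0:ℝ) < (n:ℝ) + 3 := by positivity
      have h2pos : (0:ℝ) < (n:ℝ) + 2 := by positivity
      have hα3' : 2/((n:ℝ)+3) ≤ 1 := by
        rw [div_le_one h3pos]
        have : (0:ℝ) ≤ (n:ℝ) := Nat.cast_nonneg n
        linarith
      have hαd : (0:ℝ) ≤ 2/((n:ℝ)+2) - 2/((n:ℝ)+3) := by
        rw [sub_nonneg]
        gcongr
        linarith
      have hTT : ‖T (x (n+1)) - T (x n)‖ ≤ ‖x (n+1) - x n‖ :=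
        hT _ (hxC _) _ (hxC _)
      have hstep2 : ‖y (n+1) - y n‖
          ≤ (1 - 2/((n:ℝ)+3)) * ‖x (n+1) - x n‖
            + (2/((n:ℝ)+2) - 2/((n:ℝ)+3)) * (2*(K:ℝ)) := by
        rw [hid2]
        refine le_trans (norm_add_le _ _) ?_
        rw [norm_smul, norm_smul, Real.norm_eq_abs, Real.norm_eq_abs,
          abs_of_nonneg (by linarith), abs_of_nonneg hαd]
        have h4 := mul_le_mul_of_nonneg_left hTT (by linarith : (0:ℝ) ≤ 1 - 2/((n:ℝ)+3))
        have h5 := mul_le_mul_of_nonneg_left (hTu n) hαd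
        linarith
      have heq : (1 - 2/((n:ℝ)+3)) * (4*(K:ℝ)/((n:ℝ)+2))
          + (2/((n:ℝ)+2) - 2/((n:ℝ)+3)) * (2*(K:ℝ)) = 4*(K:ℝ)/((n:ℝ)+3) := by
        field_simp
        ring
      have h6 := mul_le_mul_of_nonneg_left ih (by linarith : (0:ℝ) ≤ 1 - 2/((n:ℝ)+3))
      have hgoal : ‖x (n+2) - x (n+1)‖ ≤ 4*(K:ℝ)/((n:ℝ)+3) := by linarith
      have hc : ((n+1:ℕ):ℝ) + 2 = (n:ℝ) + 3 := by push_cast; ring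
      rw [hc]
      exact hgoal
  -- key quadratic estimate
  have hkey : ∀ n, β*(1-β) * ‖U (y n) - y n‖^2 ≤ 24*(K:ℝ)^2/((n:ℝ)+2) := by
    intro n
    have h2pos : (0:ℝ) < (n:ℝ) + 2 := by positivity
    have hidx : x (n+1) - p = (1-β) • (U (y n) - p) + β • (y n - p) := by
      rw [hx n]; module
    have hsq : ‖x (n+1) - p‖^2
        = (1-β)*‖U (y n) - p‖^2 + β*‖y n - p‖^2 - β*(1-β)*‖U (y n) - y n‖^2 := by
      rw [hidx, combo_norm_sq, sub_sub_sub_cancel_right]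
    have h1 : ‖U (y n) - p‖^2 ≤ ‖y n - p‖^2 := by
      nlinarith [hUy n, norm_nonneg (U (y n) - p)]
    have h1' : (0:ℝ) ≤ (1-β)*(‖y n - p‖^2 - ‖U (y n) - p‖^2) :=
      mul_nonneg (by linarith) (by linarith)
    have h2 : β*(1-β)*‖U (y n) - y n‖^2 ≤ ‖y n - p‖^2 - ‖x (n+1) - p‖^2 := by
      nlinarith [hsq, h1']
    -- ‖y n - p‖² - ‖x n - p‖² ≤ 4K·(α_n K)
    have hA : ‖y n - p‖^2 - ‖x n - p‖^2 ≤ 4*(K:ℝ)*((2/((n:ℝ)+2))*(K:ℝ)) := by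
      refine sq_diff_le (norm_nonneg _) (norm_nonneg _) (hxK n) ?_ ?_ (hyK n)
      · positivity
      · nlinarith [hα1 n, hKpos]
    -- ‖x n - p‖² - ‖x (n+1) - p‖² ≤ 4K·‖x(n+1) - x n‖
    have htri : ‖x n - p‖ ≤ ‖x (n+1) - p‖ + ‖x (n+1) - x n‖ := by
      have hid : x n - p = (x (n+1) - p) - (x (n+1) - x n) := by abel
      have h1 : ‖x n - p‖ ≤ ‖x (n+1) - p‖ + ‖x (n+1) - x n‖ := by
        rw [hid]; exact norm_sub_le _ _
      linarith
    have heK : ‖x (n+1) - x n‖ ≤ 2*(K:ℝ) := by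
      have h1 := he n
      have h2 : 4*(K:ℝ)/((n:ℝ)+2) ≤ 2*(K:ℝ) := by
        rw [div_le_iff₀ h2pos]
        nlinarith [Nat.cast_nonneg (α := ℝ) n, hKpos]
      linarith
    have hB : ‖x n - p‖^2 - ‖x (n+1) - p‖^2 ≤ 4*(K:ℝ)*‖x (n+1) - x n‖ :=
      sq_diff_le (norm_nonneg _) (norm_nonneg _) (hxK (n+1)) (norm_nonneg _) heK htri
    have hB' : 4*(K:ℝ)*‖x (n+1) - x n‖ ≤ 4*(K:ℝ)*(4*(K:ℝ)/((n:ℝ)+2)) :=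
      mul_le_mul_of_nonneg_left (he n) (by positivity)
    have heq : 4*(K:ℝ)*((2/((n:ℝ)+2))*(K:ℝ)) + 4*(K:ℝ)*(4*(K:ℝ)/((n:ℝ)+2))
        = 24*(K:ℝ)^2/((n:ℝ)+2) := by
      field_simp
      ring
    linarith
  -- conclusion
  intro k n hn
  have hΛ1 : 1 ≤ Λ := by
    rw [hΛ, Nat.one_le_ceil_iff]
    exact lt_max_of_lt_left (by positivity)
  have hΛR : (1:ℝ) ≤ (Λ:ℝ) := by exact_mod_cast hΛ1
  have hβΛ : 1 ≤ β * (Λ:ℝ) := by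
    have h1 : 1/β ≤ (Λ:ℝ) := by
      rw [hΛ]; exact le_trans (le_max_left _ _) (Nat.le_ceil _)
    rw [div_le_iff₀ hβ0] at h1
    nlinarith
  have hβΛ' : 1 ≤ (1-β) * (Λ:ℝ) := by
    have h1 : 1/(1-β) ≤ (Λ:ℝ) := by
      rw [hΛ]; exact le_trans (le_max_right _ _) (Nat.le_ceil _)
    rw [div_le_iff₀ hβ1'] at h1
    nlinarith
  have hΛsq : 1 ≤ β*(1-β)*(Λ:ℝ)^2 := by
    nlinarith [mul_le_mul hβΛ hβΛ' zero_le_one (by positivity : (0:ℝ) ≤ β * (Λ:ℝ))]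
  have hKposN : 0 < K := hK0
  have hN2 : 2 ≤ 2 ^ 6 * K ^ 2 * Λ ^ 2 * (k + 1) ^ 2 := by
    calc (2:ℕ) ≤ 2^6 * 1 * 1 * 1 := by norm_num
    _ ≤ 2 ^ 6 * K ^ 2 * Λ ^ 2 * (k + 1) ^ 2 := by
        gcongr <;> [exact Nat.one_le_pow _ _ hKposN;
          exact Nat.one_le_pow _ _ hΛ1; exact Nat.one_le_pow _ _ (Nat.succ_pos k)]
  set N : ℕ := 2 ^ 6 * K ^ 2 * Λ ^ 2 * (k + 1) ^ 2 with hNdef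
  have hn2 : N ≤ n + 2 := by omega
  have hnR : (2:ℝ)^6 * (K:ℝ)^2 * (Λ:ℝ)^2 * ((k:ℝ)+1)^2 ≤ (n:ℝ) + 2 := by
    have := hn2
    rw [hNdef] at this
    exact_mod_cast this
  have hn2pos : (0:ℝ) < (n:ℝ) + 2 := by positivity
  have hk1 : (0:ℝ) < (k:ℝ) + 1 := by positivity
  have hd := hkey n
  set d := ‖U (y n) - y n‖ with hddef
  have hd0 : (0:ℝ) ≤ d := norm_nonneg _
  -- d² ≤ 24 K² Λ² / (n+2)
  have hd2 : d^2 ≤ 24*(K:ℝ)^2*(Λ:ℝ)^2/((n:ℝ)+2) := by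
    have h1 : d^2 * 1 ≤ d^2 * (β*(1-β)*(Λ:ℝ)^2) :=
      mul_le_mul_of_nonneg_left hΛsq (sq_nonneg d)
    have h2 : (Λ:ℝ)^2 * (β*(1-β)*d^2) ≤ (Λ:ℝ)^2 * (24*(K:ℝ)^2/((n:ℝ)+2)) :=
      mul_le_mul_of_nonneg_left hd (sq_nonneg (Λ:ℝ))
    have h3 : (Λ:ℝ)^2 * (24*(K:ℝ)^2/((n:ℝ)+2)) = 24*(K:ℝ)^2*(Λ:ℝ)^2/((n:ℝ)+2) := by
      ring
    nlinarith
  have hfrac : 24*(K:ℝ)^2*(Λ:ℝ)^2/((n:ℝ)+2) ≤ (1/((k:ℝ)+1))^2 := by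
    rw [div_le_iff₀ hn2pos]
    have hcpos : (0:ℝ) < (1/((k:ℝ)+1))^2 := by positivity
    have h1 := mul_le_mul_of_nonneg_left hnR (le_of_lt hcpos)
    have h2 : (1/((k:ℝ)+1))^2 * ((2:ℝ)^6 * (K:ℝ)^2 * (Λ:ℝ)^2 * ((k:ℝ)+1)^2)
        = 64*(K:ℝ)^2*(Λ:ℝ)^2 := by
      field_simp
      ring
    have h3 : (0:ℝ) ≤ (K:ℝ)^2*(Λ:ℝ)^2 := by positivity
    nlinarith
  have hdc : d^2 ≤ (1/((k:ℝ)+1))^2 := le_trans hd2 hfrac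
  have hcpos : (0:ℝ) < 1/((k:ℝ)+1) := by positivity
  nlinarith [sq_nonneg (d - 1/((k:ℝ)+1))]
end
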